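/- arXiv:1801.10410 — 12 statements merged into one kernel-verified Lean document; each statement's English description precedes it below -/
import Mathlib

section
/- Let G be a group and let ρ : G → Equiv.Perm G be the right regular representation, ρ(g) : h ↦ h*g. Then the normalizer of the image ρ(G) in Equiv.Perm G equals the set of permutations of the form (automorphism composed with right translation), i.e. N_{Perm(G)}(ρ(G)) = { α ∘ ρ(g) : α ∈ Aut(G), g ∈ G }. -/
/-- The image of the right regular representation, as a subgroup of `Perm G`. -/
private def rrS (G : Type*) [Group G] : Subgroup (Equiv.Perm G) where
  carrier := Set.range fun g : G => (Equiv.mulRight g : Equiv.Perm G)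
  one_mem' := ⟨1, by ext x; simp⟩
  mul_mem' := by
    rintro _ _ ⟨a, rfl⟩ ⟨b, rfl⟩
    exact ⟨b * a, by ext x; simp [Equiv.Perm.mul_apply, mul_assoc]⟩
  inv_mem' := by
    rintro _ ⟨a, rfl⟩
    exact ⟨a⁻¹, by ext x; simp [Equiv.Perm.inv_def]⟩

private lemma conj_eq {G : Type*} [Group G] (α : MulAut G) (g k : G) :
    (α.toEquiv.trans (Equiv.mulRight g)) * Equiv.mulRight k *
      (α.toEquiv.trans (Equiv.mulRight g))⁻¹ =
    Equiv.mulRight (g⁻¹ * α k * g) := by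
  ext x
  simp [Equiv.Perm.mul_apply, Equiv.Perm.inv_def, map_mul, mul_assoc]

private lemma inv_eq {G : Type*} [Group G] (α : MulAut G) (g : G) :
    (α.toEquiv.trans (Equiv.mulRight g))⁻¹ =
    (α.symm.toEquiv.trans (Equiv.mulRight (α.symm g)⁻¹)) := by
  ext x
  simp [Equiv.Perm.inv_def, ← map_inv, ← map_mul]

/-- The normalizer in `Perm G` of the image of the right regular representation
`ρ(g) : h ↦ h * g` is exactly the set of permutations of the form
"automorphism followed by right translation", `x ↦ α(x) * g`. -/
theorem stmt_1 (G : Type*) [Group G] :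
    ((Subgroup.normalizer ((Subgroup.closure
        (Set.range fun g : G => (Equiv.mulRight g : Equiv.Perm G))) : Set (Equiv.Perm G)))
        : Set (Equiv.Perm G))
      = { σ : Equiv.Perm G |
          ∃ (α : MulAut G) (g : G), σ = α.toEquiv.trans (Equiv.mulRight g) } := by
  rw [show (Set.range fun g : G => (Equiv.mulRight g : Equiv.Perm G)) = ↑(rrS G) from rfl,
    Subgroup.closure_eq]
  ext σ
  simp only [SetLike.mem_coe, Set.mem_setOf_eq]
  constructor
  · intro hσ
    rw [Subgroup.mem_normalizer_iff] at hσ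
    have key : ∀ g x : G, σ (x * g) = σ x * ((σ 1)⁻¹ * σ g) := by
      intro g x
      obtain ⟨k, hk⟩ := (hσ (Equiv.mulRight g)).mp ⟨g, rfl⟩
      have h1 : ∀ y : G, y * k = σ (σ⁻¹ y * g) := by
        intro y
        have := Equiv.ext_iff.mp hk y
        simpa [Equiv.Perm.mul_apply] using this
      have hx := h1 (σ x)
      have h1' := h1 (σ 1)
      simp only [Equiv.Perm.inv_def, Equiv.symm_apply_apply] at hx h1'
      rw [one_mul] at h1'
      have hkval : k = (σ 1)⁻¹ * σ g := by
        rw [← h1']; group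
      rw [← hx, hkval]
    have hmul : ∀ x y : G, σ (x * y) * (σ 1)⁻¹ = (σ x * (σ 1)⁻¹) * (σ y * (σ 1)⁻¹) := by
      intro x y
      rw [key y x]
      group
    refine ⟨MulEquiv.mk (σ.trans (Equiv.mulRight (σ 1)⁻¹)) hmul, σ 1, ?_⟩
    ext x
    simp
  · rintro ⟨α, g, rfl⟩
    rw [Subgroup.mem_normalizer_iff]
    intro h
    constructor
    · rintro ⟨k, rfl⟩
      exact ⟨g⁻¹ * α k * g, (conj_eq α g k).symm⟩
    · rintro ⟨k, hk⟩
      set σ := α.toEquiv.trans (Equiv.mulRight g) with hσdef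
      have h2 : h = σ⁻¹ * Equiv.mulRight k * (σ⁻¹)⁻¹ := by
        have hk' : Equiv.mulRight k = σ * h * σ⁻¹ := hk
        rw [hk']; group
      rw [h2, inv_eq]
      exact ⟨((α.symm g)⁻¹)⁻¹ * α.symm k * (α.symm g)⁻¹,
        (conj_eq α.symm ((α.symm g)⁻¹) k).symm⟩
end

section
/- Let G be a finite group, N a regular subgroup of Perm(G) normalized by Hol(G) = Aut(G)·ρ(G), and γ : G → Aut(G) the map with ν(h) = γ(h)∘ρ(h) ∈ N where 1^{ν(h)} = h. Then for all g, h ∈ G: γ(g*h) = γ(h)∘γ(g), and for all β ∈ Aut(G): γ(g^β) = β⁻¹∘γ(g)∘β. -/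
private lemma conj_mem_closure' {G : Type*} [Group G] (τ : Equiv.Perm G)
    (h : ∀ g : G, ∃ k : G, τ * Equiv.mulRight g * τ⁻¹ = Equiv.mulRight k) :
    ∀ σ ∈ Subgroup.closure (Set.range fun g : G => (Equiv.mulRight g : Equiv.Perm G)),
      τ * σ * τ⁻¹ ∈ Subgroup.closure (Set.range fun g : G => (Equiv.mulRight g : Equiv.Perm G)) := by
  intro σ hσ
  induction hσ using Subgroup.closure_induction with
  | mem x hx =>
      obtain ⟨g, rfl⟩ := hx
      obtain ⟨k, hk⟩ := h g
      rw [hk]; exact Subgroup.subset_closure ⟨k, rfl⟩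
  | one => simpa using Subgroup.one_mem _
  | mul x y hx hy ihx ihy =>
      have e : τ * (x * y) * τ⁻¹ = (τ * x * τ⁻¹) * (τ * y * τ⁻¹) := by group
      rw [e]; exact Subgroup.mul_mem _ ihx ihy
  | inv x hx ihx =>
      have e : τ * x⁻¹ * τ⁻¹ = (τ * x * τ⁻¹)⁻¹ := by group
      rw [e]; exact Subgroup.inv_mem _ ihx

private lemma mem_normalizer_of_conj' {G : Type*} [Group G] (τ : Equiv.Perm G)
    (h1 : ∀ g : G, ∃ k : G, τ * Equiv.mulRight g * τ⁻¹ = Equiv.mulRight k)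
    (h2 : ∀ g : G, ∃ k : G, τ⁻¹ * Equiv.mulRight g * τ = Equiv.mulRight k) :
    τ ∈ Subgroup.normalizer ((Subgroup.closure
        (Set.range fun g : G => (Equiv.mulRight g : Equiv.Perm G))) : Set (Equiv.Perm G)) := by
  rw [Subgroup.mem_normalizer_iff]
  intro σ
  constructor
  · exact fun hσ => conj_mem_closure' τ h1 σ hσ
  · intro hσ
    have h2' : ∀ g : G, ∃ k : G, τ⁻¹ * Equiv.mulRight g * τ⁻¹⁻¹ = Equiv.mulRight k := by
      simpa using h2
    have := conj_mem_closure' τ⁻¹ h2' _ hσ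
    have e : τ⁻¹ * (τ * σ * τ⁻¹) * τ⁻¹⁻¹ = σ := by group
    rwa [e] at this

/-- If `N` is a regular subgroup of `Perm G` normalized by the holomorph
`Hol(G) = N_{Perm G}(ρ(G))`, and `γ : G → Aut G` is the map with
`ν(h) : x ↦ γ(h)(x) * h` belonging to `N`, then (in the paper's left-to-right
composition, translated to Mathlib's conventions) `γ(gh) = γ(h)γ(g)` and
`γ(g^β) = γ(g)^β = β⁻¹ ∘ γ(g) ∘ β` for every `β ∈ Aut G`. -/
theorem stmt_2 (G : Type*) [Group G] [Finite G]
    (N : Subgroup (Equiv.Perm G))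
    (hreg : ∀ h : G, ∃! σ : Equiv.Perm G, σ ∈ N ∧ σ 1 = h)
    (hnorm : ∀ τ ∈ Subgroup.normalizer ((Subgroup.closure
        (Set.range fun g : G => (Equiv.mulRight g : Equiv.Perm G))) : Set (Equiv.Perm G)),
        ∀ σ ∈ N, τ * σ * τ⁻¹ ∈ N)
    (γ : G → MulAut G)
    (hν : ∀ h : G, (γ h).toEquiv.trans (Equiv.mulRight h) ∈ N) :
    (∀ g h : G, γ (g * h) = γ g * γ h) ∧
    (∀ (β : MulAut G) (g : G), γ (β g) = β * γ g * β⁻¹) := by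
  set ν : G → Equiv.Perm G := fun h => (γ h).toEquiv.trans (Equiv.mulRight h) with hνdef
  have hνapp : ∀ h x : G, ν h x = γ h x * h := fun h x => rfl
  have hν1 : ∀ h : G, ν h 1 = h := by intro h; simp [hνapp]
  -- ρ(h) is in the normalizer
  have hρ : ∀ h : G, (Equiv.mulRight h : Equiv.Perm G) ∈ Subgroup.normalizer ((Subgroup.closure
      (Set.range fun g : G => (Equiv.mulRight g : Equiv.Perm G))) : Set (Equiv.Perm G)) := by
    intro h
    apply mem_normalizer_of_conj'
    · intro g
      refine ⟨h⁻¹ * g * h, ?_⟩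
      ext x
      simp [Equiv.Perm.mul_apply, mul_assoc, Equiv.Perm.inv_def]
    · intro g
      refine ⟨h * g * h⁻¹, ?_⟩
      ext x
      simp [Equiv.Perm.mul_apply, mul_assoc, Equiv.Perm.inv_def]
  -- β is in the normalizer
  have hβmem : ∀ β : MulAut G, (β.toEquiv : Equiv.Perm G) ∈ Subgroup.normalizer ((Subgroup.closure
      (Set.range fun g : G => (Equiv.mulRight g : Equiv.Perm G))) : Set (Equiv.Perm G)) := by
    intro β
    apply mem_normalizer_of_conj'
    · intro g
      refine ⟨β g, ?_⟩
      ext x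
      simp [Equiv.Perm.mul_apply, Equiv.Perm.inv_def, map_mul, MulAut.inv_def]
    · intro g
      refine ⟨β⁻¹ g, ?_⟩
      ext x
      simp [Equiv.Perm.mul_apply, Equiv.Perm.inv_def, map_mul, MulAut.inv_def]
  constructor
  · intro g h
    set P : Equiv.Perm G :=
      (Equiv.mulRight h) * ν g * (Equiv.mulRight h)⁻¹ * ν h with hPdef
    have hPmem : P ∈ N :=
      Subgroup.mul_mem _ (hnorm _ (hρ h) _ (hν g)) (hν h)
    have hPapp : ∀ x : G, P x = γ g (γ h x) * g * h := by
      intro x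
      simp [hPdef, Equiv.Perm.mul_apply, hνapp, Equiv.Perm.inv_def, mul_assoc]
    obtain ⟨σ, -, huniq⟩ := hreg (g * h)
    have h1 : P = σ := huniq P ⟨hPmem, by rw [hPapp]; simp [mul_assoc]⟩
    have h2 : ν (g * h) = σ := huniq _ ⟨hν _, hν1 _⟩
    have hPν : P = ν (g * h) := h1.trans h2.symm
    ext x
    have := congrArg (fun σ : Equiv.Perm G => σ x) hPν
    simp only [hPapp, hνapp] at this
    have : γ g (γ h x) * (g * h) = γ (g * h) x * (g * h) := by
      rw [← this]; group
    exact (mul_right_cancel this).symm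
  · intro β g
    set Q : Equiv.Perm G := (β.toEquiv : Equiv.Perm G) * ν g * (β.toEquiv : Equiv.Perm G)⁻¹
      with hQdef
    have hQmem : Q ∈ N := hnorm _ (hβmem β) _ (hν g)
    have hQapp : ∀ x : G, Q x = β (γ g (β⁻¹ x)) * β g := by
      intro x
      simp [hQdef, Equiv.Perm.mul_apply, hνapp, Equiv.Perm.inv_def, map_mul, MulAut.inv_def]
    obtain ⟨σ, -, huniq⟩ := hreg (β g)
    have h1 : Q = σ := huniq Q ⟨hQmem, by rw [hQapp]; simp⟩
    have h2 : ν (β g) = σ := huniq _ ⟨hν _, hν1 _⟩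
    have hQν : Q = ν (β g) := h1.trans h2.symm
    ext x
    have := congrArg (fun σ : Equiv.Perm G => σ x) hQν
    simp only [hQapp, hνapp] at this
    have hc : β (γ g (β⁻¹ x)) = γ (β g) x := mul_right_cancel this
    simpa using hc.symm
end

section
/- Let G be a group, N a regular subgroup of Perm(G) normal in Hol(G), with associated map γ : G → Aut(G) satisfying γ(gh) = γ(h)γ(g) and γ(g^β) = γ(g)^β for all β ∈ Aut(G). Then for all g, h ∈ G: γ([h, g⁻¹]) equals the inner automorphism induced by the commutator [γ(g), h] (computed in the holomorph Aut(G)⋉G). -/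
/-- For a regular subgroup `N ⊴ Hol(G)` with associated map `γ : G → Aut G`
(satisfying, in Mathlib's composition convention, `γ(gh) = γ(g)γ(h)` and
`γ(β(g)) = β γ(g) β⁻¹`), one has `γ([h, g⁻¹]) = ι([γ(g), h])`,
where `[a,b] = a⁻¹b⁻¹ab`, the commutator `[γ(g), h] = γ(g)(h)⁻¹ * h` is
computed in the holomorph, and `ι(w) : y ↦ w⁻¹ y w` is the inner
automorphism induced by `w`. -/
theorem stmt_3 (G : Type*) [Group G]
    (γ : G → MulAut G)
    (hγ : ∀ g h : G, γ (g * h) = γ g * γ h)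
    (hβ : ∀ (β : MulAut G) (g : G), γ (β g) = β * γ g * β⁻¹)
    (g h : G) :
    γ (h⁻¹ * g * h * g⁻¹) = MulAut.conj ((((γ g) h)⁻¹ * h)⁻¹) := by
  have h1 : γ (1 : G) = 1 := by
    have h := hγ 1 1
    rw [mul_one] at h
    exact (mul_eq_left.mp h.symm)
  have hinv : ∀ x : G, γ x⁻¹ = (γ x)⁻¹ := by
    intro x
    refine eq_inv_of_mul_eq_one_left ?_
    rw [← hγ, inv_mul_cancel, h1]
  have hconj : ∀ (β : MulAut G) (x : G),
      MulAut.conj (β x) = β * MulAut.conj x * β⁻¹ := by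
    intro β x
    ext y
    simp [MulAut.conj_apply, mul_assoc]
  have key1 : ∀ x y : G, γ x * γ y * (γ x)⁻¹
      = MulAut.conj x * γ y * (MulAut.conj x)⁻¹ := by
    intro x y
    have h2 := hβ (MulAut.conj x) y
    rw [MulAut.conj_apply, hγ, hγ, hinv] at h2
    exact h2
  have key1' : (γ h)⁻¹ * γ g * γ h
      = (MulAut.conj h)⁻¹ * γ g * MulAut.conj h := by
    have h3 := key1 h⁻¹ g
    rw [hinv, inv_inv, map_inv, inv_inv] at h3
    exact h3
  have lhs : γ (h⁻¹ * g * h * g⁻¹) = (γ h)⁻¹ * γ g * γ h * (γ g)⁻¹ := by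
    rw [hγ, hγ, hγ, hinv, hinv]
  have rhs : MulAut.conj ((((γ g) h)⁻¹ * h)⁻¹)
      = (MulAut.conj h)⁻¹ * (γ g * MulAut.conj h * (γ g)⁻¹) := by
    rw [mul_inv_rev, inv_inv, map_mul, map_inv, hconj (γ g) h]
  rw [lhs, rhs, ← mul_assoc, ← mul_assoc, ← key1']
end

section
/- Let G be a finite p-group of class two and γ : G → Aut(G) an anti-homomorphism satisfying γ(g^β) = γ(g)^β for all β ∈ Aut(G). Then the following are equivalent: (1) γ(G') = 1; (2) the image γ(G) is abelian; (3) [G, γ(G)] ≤ Z(G), i.e. γ(G) consists of central automorphisms; (4) [γ(G), G] ≤ ker(γ). -/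
/-- For a finite `p`-group `G` of class two and `γ : G → Aut G` an
anti-homomorphism (in the paper's convention; a homomorphism in Mathlib's
composition convention) which is `Aut G`-equivariant, the following are
equivalent: (1) `γ(G') = 1`; (2) `γ(G)` is abelian;
(3) `[G, γ(G)] ≤ Z(G)`, i.e. `γ(G)` consists of central automorphisms;
(4) `[γ(G), G] ≤ ker γ`. -/
theorem stmt_4 (p : ℕ) (hp : p.Prime) (G : Type*) [Group G] [Finite G]
    (hpG : IsPGroup p G)
    (h2 : commutator G ≤ Subgroup.center G) (hnab : commutator G ≠ ⊥)
    (γ : G → MulAut G)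
    (hγ : ∀ g h : G, γ (g * h) = γ g * γ h)
    (hβ : ∀ (β : MulAut G) (g : G), γ (β g) = β * γ g * β⁻¹) :
    List.TFAE
      [ ∀ w ∈ commutator G, γ w = 1,
        ∀ g h : G, γ g * γ h = γ h * γ g,
        ∀ g h : G, g⁻¹ * (γ h) g ∈ Subgroup.center G,
        ∀ g h : G, γ (g⁻¹ * (γ h) g) = 1 ] := by
  set γ' : G →* MulAut G := MonoidHom.mk' γ hγ with hγ'def
  have hginv : ∀ g : G, γ g⁻¹ = (γ g)⁻¹ := fun g => map_inv γ' g
  -- key pointwise identity relating item 4 to commutators in the image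
  have key4 : ∀ g h : G, γ (g⁻¹ * (γ h) g) = (γ g)⁻¹ * γ h * γ g * (γ h)⁻¹ := by
    intro g h
    have h1 : γ ((γ h) g) = γ h * γ g * (γ h)⁻¹ := hβ (γ h) g
    rw [hγ, hginv, h1, mul_assoc, mul_assoc, mul_assoc]
  -- unconditional "star" identity from equivariance at inner automorphisms
  have hstar : ∀ x g : G, γ x * γ g * (γ x)⁻¹ = MulAut.conj x * γ g * (MulAut.conj x)⁻¹ := by
    intro x g
    have h1 := hβ (MulAut.conj x) g
    have h2 : (MulAut.conj x) g = x * g * x⁻¹ := rfl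
    rw [h2, hγ, hγ, hginv] at h1
    exact h1
  tfae_have 1 → 2 := by
    intro h1 g h
    open scoped commutatorElement in
    have hm : ⁅g, h⁆ ∈ commutator G := by
      rw [commutator_def]
      exact Subgroup.commutator_mem_commutator (Subgroup.mem_top g) (Subgroup.mem_top h)
    open scoped commutatorElement in
    have hc : ⁅γ g, γ h⁆ = 1 := (map_commutatorElement γ' g h).symm.trans (h1 _ hm)
    exact commutatorElement_eq_one_iff_mul_comm.mp hc
  tfae_have 2 → 1 := by
    intro h2' w hw
    have hle : commutator G ≤ γ'.ker := by
      rw [commutator_def, Subgroup.commutator_le]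
      intro g _ h _
      rw [MonoidHom.mem_ker, map_commutatorElement,
        commutatorElement_eq_one_iff_mul_comm]
      exact h2' g h
    exact hle hw
  tfae_have 2 → 3 := by
    intro h2' x h
    -- conj x commutes with γ h
    have st : MulAut.conj x * γ h * (MulAut.conj x)⁻¹ = γ h := by
      rw [← hstar, h2' x h, mul_inv_cancel_right]
    have hc : MulAut.conj x * γ h = γ h * MulAut.conj x :=
      mul_inv_eq_iff_eq_mul.mp st
    have pw : ∀ t : G, x * (γ h) t * x⁻¹ = (γ h) (x * t * x⁻¹) := by
      intro t
      have := congrArg (fun f : MulAut G => f t) hc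
      simpa using this
    set a := (γ h) x with ha
    have hu : ∀ w : G, (a⁻¹ * x) * w = w * (a⁻¹ * x) := by
      intro w
      have e := pw ((γ h).symm w)
      rw [map_mul, map_mul, MulEquiv.apply_symm_apply, map_inv] at e
      -- e : x * w * x⁻¹ = a * w * a⁻¹  (after rewriting)
      calc a⁻¹ * x * w = a⁻¹ * (x * w * x⁻¹) * x := by group
        _ = a⁻¹ * (a * w * a⁻¹) * x := by rw [e]
        _ = w * (a⁻¹ * x) := by group
    have humem : a⁻¹ * x ∈ Subgroup.center G :=
      Subgroup.mem_center_iff.mpr fun b => (hu b).symm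
    have : x⁻¹ * (γ h) x = (a⁻¹ * x)⁻¹ := by rw [← ha]; group
    rw [this]
    exact Subgroup.inv_mem _ humem
  tfae_have 3 → 2 := by
    intro h3 g h
    have stepA : MulAut.conj g * γ h * (MulAut.conj g)⁻¹ = γ h := by
      ext t
      have hz := h3 g h
      set z := g⁻¹ * (γ h) g with hzdef
      have hz' : ∀ b : G, b * z = z * b := fun b => Subgroup.mem_center_iff.mp hz b
      have ha : (γ h) g = g * z := by rw [hzdef]; group
      have ha' : (γ h) g = z * g := ha.trans (hz' g)
      show g * (γ h) ((MulAut.conj g)⁻¹ t) * g⁻¹ = (γ h) t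
      have hct : (MulAut.conj g)⁻¹ t = g⁻¹ * t * g := rfl
      rw [hct, map_mul, map_mul, map_inv, ha']
      calc g * ((z * g)⁻¹ * (γ h) t * (z * g)) * g⁻¹
          = z⁻¹ * ((γ h) t * z) := by group
        _ = z⁻¹ * (z * (γ h) t) := by rw [hz' ((γ h) t)]
        _ = (γ h) t := by group
    have := (hstar g h).trans stepA
    exact mul_inv_eq_iff_eq_mul.mp this
  tfae_have 2 → 4 := by
    intro h2' g h
    rw [key4, mul_assoc (γ g)⁻¹, ← h2' g h]
    group
  tfae_have 4 → 2 := by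
    intro h4 g h
    have e := h4 h g
    rw [key4] at e
    have l : γ g * γ h = γ h * ((γ h)⁻¹ * γ g * γ h * (γ g)⁻¹) * γ g := by group
    rw [l, e]
    group
  tfae_finish
end

section
/- Let G be a finite p-group of class two with p odd, and N ⊴ Hol(G) a regular subgroup with map γ satisfying γ(G) ≤ Aut_c(G) and [Z(G), γ(G)] = 1. Then for all g, h ∈ G, the commutator in N satisfies [ν(g), ν(h)] = ν([g,h] · [g, γ(h)] · [h, γ(g)]⁻¹), where ν(h) = γ(h)∘ρ(h). -/
/-- Let `G` be a finite `p`-group of class two, `p` odd, and `N ⊴ Hol(G)` a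
regular subgroup parametrized by `ν(h) : x ↦ γ(h)(x) * h`, where
`γ(G) ≤ Aut_c(G)` and `[Z(G), γ(G)] = 1`. Then the commutator (in the paper's
convention `[a,b] = a⁻¹b⁻¹ab` with left-to-right composition, written here in
Mathlib's convention) satisfies
`[ν(g), ν(h)] = ν([g,h] · [g,γ(h)] · [h,γ(g)]⁻¹)`. -/
theorem stmt_7 (p : ℕ) (hp : p.Prime) (hodd : Odd p)
    (G : Type*) [Group G] [Finite G] (hpG : IsPGroup p G)
    (h2 : commutator G ≤ Subgroup.center G) (hnab : commutator G ≠ ⊥)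
    (γ : G → MulAut G)
    (hγ : ∀ g h : G, γ (g * h) = γ g * γ h)
    (hβ : ∀ (β : MulAut G) (g : G), γ (β g) = β * γ g * β⁻¹)
    (hcent : ∀ g h : G, g⁻¹ * (γ h) g ∈ Subgroup.center G)
    (hZ : ∀ h : G, ∀ z ∈ Subgroup.center G, (γ h) z = z)
    (ν : G → Equiv.Perm G)
    (hν : ∀ h : G, ν h = (γ h).toEquiv.trans (Equiv.mulRight h)) :
    ∀ g h : G,
      ν h * ν g * (ν h)⁻¹ * (ν g)⁻¹
        = ν ((g⁻¹ * h⁻¹ * g * h) * (g⁻¹ * (γ h) g) * (h⁻¹ * (γ g) h)⁻¹) := by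
  intro g h
  -- γ 1 = 1
  have hγ1 : γ 1 = 1 := by
    have h11 := hγ 1 1
    rw [mul_one] at h11
    exact (left_eq_mul.mp h11)
  -- γ a⁻¹ = (γ a)⁻¹
  have hγinv : ∀ a : G, γ a⁻¹ = (γ a)⁻¹ := by
    intro a
    have h1 : γ a * γ a⁻¹ = 1 := by rw [← hγ, mul_inv_cancel, hγ1]
    exact (inv_eq_of_mul_eq_one_right h1).symm
  -- pointwise multiplicativity
  have hγp : ∀ a b x : G, γ (a * b) x = γ a (γ b x) := by
    intro a b x; rw [hγ]; rfl
  -- the automorphisms γ a commute pointwise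
  have hcomm : ∀ a b y : G, γ a (γ b y) = γ b (γ a y) := by
    intro a b y
    have hzb := hcent y b
    have hza := hcent y a
    calc γ a (γ b y) = γ a (y * (y⁻¹ * γ b y)) := by rw [mul_inv_cancel_left]
      _ = γ a y * (y⁻¹ * γ b y) := by rw [map_mul, hZ a _ hzb]
      _ = y * (y⁻¹ * γ a y) * (y⁻¹ * γ b y) := by rw [mul_inv_cancel_left]
      _ = y * ((y⁻¹ * γ a y) * (y⁻¹ * γ b y)) := by
            rw [mul_assoc y (y⁻¹ * γ a y) (y⁻¹ * γ b y)]
      _ = y * ((y⁻¹ * γ b y) * (y⁻¹ * γ a y)) := by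
            rw [Subgroup.mem_center_iff.mp hzb (y⁻¹ * γ a y)]
      _ = y * (y⁻¹ * γ b y) * (y⁻¹ * γ a y) := by
            rw [← mul_assoc y (y⁻¹ * γ b y) (y⁻¹ * γ a y)]
      _ = γ b y * (y⁻¹ * γ a y) := by rw [mul_inv_cancel_left]
      _ = γ b (y * (y⁻¹ * γ a y)) := by rw [map_mul, hZ b _ hza]
      _ = γ b (γ a y) := by rw [mul_inv_cancel_left]
  -- if γ c is pointwise trivial then so is γ c⁻¹
  have hfixinv : ∀ c : G, (∀ x, γ c x = x) → ∀ x : G, γ c⁻¹ x = x := by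
    intro c hcf x
    have h1 : γ c (γ c⁻¹ x) = x := by
      rw [← hγp, mul_inv_cancel, hγ1]; rfl
    calc γ c⁻¹ x = γ c (γ c⁻¹ x) := (hcf _).symm
      _ = x := h1
  -- γ is trivial on elements of the form a⁻¹ * γ b a
  have hfixB : ∀ a b x : G, γ (a⁻¹ * γ b a) x = x := by
    intro a b x
    have h1 : γ (γ b a) x = γ b (γ a ((γ b)⁻¹ x)) := by
      rw [hβ (γ b) a]; rfl
    calc γ (a⁻¹ * γ b a) x = γ a⁻¹ (γ (γ b a) x) := hγp _ _ _
      _ = γ a⁻¹ (γ b (γ a ((γ b)⁻¹ x))) := by rw [h1]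
      _ = γ a⁻¹ (γ a (γ b ((γ b)⁻¹ x))) := by rw [hcomm b a ((γ b)⁻¹ x)]
      _ = γ a⁻¹ (γ a x) := by rw [MulAut.apply_inv_self]
      _ = x := by rw [← hγp, inv_mul_cancel, hγ1]; rfl
  -- γ is trivial on commutators
  have hfixC : ∀ a b x : G, γ (a⁻¹ * b⁻¹ * a * b) x = x := by
    intro a b x
    calc γ (a⁻¹ * b⁻¹ * a * b) x = γ a⁻¹ (γ b⁻¹ (γ a (γ b x))) := by
          rw [hγp, hγp, hγp]
      _ = γ a⁻¹ (γ b⁻¹ (γ b (γ a x))) := by rw [hcomm a b x]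
      _ = γ a⁻¹ (γ a x) := by rw [← hγp b⁻¹ b, inv_mul_cancel, hγ1]; rfl
      _ = x := by rw [← hγp, inv_mul_cancel, hγ1]; rfl
  -- commutators are central
  have hwZ : g⁻¹ * h⁻¹ * g * h ∈ Subgroup.center G := by
    apply h2
    open scoped commutatorElement in
    have hmem : ⁅g⁻¹, h⁻¹⁆ ∈ commutator G :=
      Subgroup.commutator_mem_commutator (Subgroup.mem_top _) (Subgroup.mem_top _)
    simpa [commutatorElement_def, mul_assoc] using hmem
  -- γ is trivial on the element X
  have hfixX : ∀ x : G,
      γ ((g⁻¹ * h⁻¹ * g * h) * (g⁻¹ * (γ h) g) * (h⁻¹ * (γ g) h)⁻¹) x = x := by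
    intro x
    rw [hγp ((g⁻¹ * h⁻¹ * g * h) * (g⁻¹ * (γ h) g)) ((h⁻¹ * (γ g) h)⁻¹) x,
        hγp (g⁻¹ * h⁻¹ * g * h) (g⁻¹ * (γ h) g),
        hfixinv _ (hfixB h g) x, hfixB g h, hfixC g h]
  -- the key element identity
  have E : (γ h) g * h
      = (γ g) h * g * ((g⁻¹ * h⁻¹ * g * h) * (g⁻¹ * (γ h) g) * (h⁻¹ * (γ g) h)⁻¹) := by
    obtain ⟨z1, c1, e1⟩ : ∃ z1 : G, (∀ y, y * z1 = z1 * y) ∧ (γ h) g = g * z1 :=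
      ⟨g⁻¹ * (γ h) g, Subgroup.mem_center_iff.mp (hcent g h), (mul_inv_cancel_left _ _).symm⟩
    obtain ⟨z2, c2, e2⟩ : ∃ z2 : G, (∀ y, y * z2 = z2 * y) ∧ (γ g) h = h * z2 :=
      ⟨h⁻¹ * (γ g) h, Subgroup.mem_center_iff.mp (hcent h g), (mul_inv_cancel_left _ _).symm⟩
    rw [e1, e2, inv_mul_cancel_left, inv_mul_cancel_left]
    symm
    calc h * z2 * g * ((g⁻¹ * h⁻¹ * g * h) * z1 * z2⁻¹)
        = h * (g * z2) * ((g⁻¹ * h⁻¹ * g * h) * z1 * z2⁻¹) := by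
          rw [mul_assoc h z2 g, ← c2 g]
      _ = h * g * (z2 * ((g⁻¹ * h⁻¹ * g * h) * z1 * z2⁻¹)) := by
          rw [← mul_assoc h g z2, mul_assoc (h * g) z2]
      _ = h * g * ((g⁻¹ * h⁻¹ * g * h) * z1 * z2⁻¹ * z2) := by
          rw [← c2 ((g⁻¹ * h⁻¹ * g * h) * z1 * z2⁻¹)]
      _ = h * g * ((g⁻¹ * h⁻¹ * g * h) * z1) := by
          rw [mul_assoc ((g⁻¹ * h⁻¹ * g * h) * z1) z2⁻¹ z2, inv_mul_cancel, mul_one]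
      _ = g * h * z1 := by group
      _ = g * (z1 * h) := by rw [mul_assoc, c1 h]
      _ = g * z1 * h := by rw [mul_assoc]
  -- pointwise form of ν
  have happ : ∀ a y : G, ν a y = γ a y * a := by
    intro a y; rw [hν]; rfl
  -- the key permutation identity
  have key : ν h * ν g
      = ν ((g⁻¹ * h⁻¹ * g * h) * (g⁻¹ * (γ h) g) * (h⁻¹ * (γ g) h)⁻¹) * (ν g * ν h) := by
    apply Equiv.ext
    intro x
    simp only [Equiv.Perm.mul_apply, happ]
    rw [hfixX]
    rw [map_mul (γ h) ((γ g) x) g, map_mul (γ g) ((γ h) x) h, hcomm g h x]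
    calc γ h (γ g x) * γ h g * h
        = γ h (γ g x) * (γ h g * h) := by rw [mul_assoc]
      _ = γ h (γ g x) * ((γ g) h * g *
            ((g⁻¹ * h⁻¹ * g * h) * (g⁻¹ * (γ h) g) * (h⁻¹ * (γ g) h)⁻¹)) := by rw [E]
      _ = γ h (γ g x) * (γ g) h * g *
            ((g⁻¹ * h⁻¹ * g * h) * (g⁻¹ * (γ h) g) * (h⁻¹ * (γ g) h)⁻¹) := by
          simp only [mul_assoc]
  have step : ν h * ν g * (ν h)⁻¹ * (ν g)⁻¹ = (ν h * ν g) * (ν g * ν h)⁻¹ := by group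
  rw [step, key, mul_inv_cancel_right]
end

section
/- Let G be a finite p-group of class two with p odd, and N ⊴ Hol(G) a regular subgroup with map γ such that γ(G) ≤ Aut_c(G) and [Z(G), γ(G)] = 1. Then for all g ∈ G and n ∈ ℕ: ν(g)^n = ν(g^n · [g, γ(g)]^(n choose 2)). In particular ν(g) has the same order as g. -/
/-- Let `G` be a finite `p`-group of class two, `p` odd, and `N ⊴ Hol(G)` a
regular subgroup parametrized by `ν(h) : x ↦ γ(h)(x) * h`, where
`γ(G) ≤ Aut_c(G)` and `[Z(G), γ(G)] = 1`. Then
`ν(g)^n = ν(g^n * [g, γ(g)]^(n choose 2))` for all `n`, where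
`[g, γ(g)] = g⁻¹ * γ(g)(g)`; in particular `ν(g)` has the same order as
`g`. -/
theorem stmt_8 (p : ℕ) (hp : p.Prime) (hodd : Odd p)
    (G : Type*) [Group G] [Finite G] (hpG : IsPGroup p G)
    (h2 : commutator G ≤ Subgroup.center G) (hnab : commutator G ≠ ⊥)
    (γ : G → MulAut G)
    (hγ : ∀ g h : G, γ (g * h) = γ g * γ h)
    (hβ : ∀ (β : MulAut G) (g : G), γ (β g) = β * γ g * β⁻¹)
    (hcent : ∀ g h : G, g⁻¹ * (γ h) g ∈ Subgroup.center G)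
    (hZ : ∀ h : G, ∀ z ∈ Subgroup.center G, (γ h) z = z)
    (ν : G → Equiv.Perm G)
    (hν : ∀ h : G, ν h = (γ h).toEquiv.trans (Equiv.mulRight h)) :
    ∀ g : G, (∀ n : ℕ,
        (ν g) ^ n = ν (g ^ n * (g⁻¹ * (γ g) g) ^ n.choose 2)) ∧
      orderOf (ν g) = orderOf g := by
  have hνapp : ∀ a x : G, ν a x = γ a x * a := fun a x => by rw [hν]; rfl
  have hγpow : ∀ (x : G) (k : ℕ), γ (x ^ k) = (γ x) ^ k := fun x k =>
    map_pow (MonoidHom.mk' γ hγ) x k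
  have hγ1 : γ 1 = 1 := map_one (MonoidHom.mk' γ hγ)
  have hν1 : ν 1 = 1 := by
    ext x
    simp [hνapp, hγ1]
  have hinj : ∀ a b : G, ν a = ν b → a = b := by
    intro a b h
    have h1 : ν a 1 = ν b 1 := by rw [h]
    simpa [hνapp] using h1
  have hchoose : ∀ d : ℕ, Odd d → d ∣ d.choose 2 := by
    intro d hd
    rcases hd with ⟨s, rfl⟩
    refine ⟨s, ?_⟩
    rw [Nat.choose_two_right]
    have h1 : 2 * s + 1 - 1 = 2 * s := by omega
    rw [h1, show (2 * s + 1) * (2 * s) = 2 * ((2 * s + 1) * s) by ring]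
    exact Nat.mul_div_cancel_left _ (by norm_num)
  intro g
  set c : G := g⁻¹ * (γ g) g with hc
  have hcZ : c ∈ Subgroup.center G := hcent g g
  have hcZk : ∀ k : ℕ, c ^ k ∈ Subgroup.center G := fun k => pow_mem hcZ k
  have hcomm : ∀ (x : G) (k : ℕ), x * c ^ k = c ^ k * x := fun x k =>
    Subgroup.mem_center_iff.mp (hcZk k) x
  have hmix : ∀ (a b : G) (i j : ℕ), a * c ^ i * (b * c ^ j) = a * b * c ^ (i + j) := by
    intro a b i j
    rw [mul_assoc, ← mul_assoc (c ^ i), ← hcomm b i, mul_assoc b, ← pow_add, ← mul_assoc]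
  have hγgg : (γ g) g = g * c := by rw [hc, mul_inv_cancel_left]
  have hγc : γ c = 1 := by
    have h1 : γ ((γ g) g) = γ g := by
      rw [hβ]
      group
    rw [hγgg, hγ] at h1
    exact mul_eq_left.mp h1
  have hγck : ∀ k : ℕ, γ (c ^ k) = 1 := fun k => by rw [hγpow, hγc, one_pow]
  have hγm : ∀ n k : ℕ, γ (g ^ n * c ^ k) = (γ g) ^ n := fun n k => by
    rw [hγ, hγpow, hγck, mul_one]
  have hgc : ∀ n : ℕ, ((γ g) ^ n) g = g * c ^ n := by
    intro n
    induction n with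
    | zero => simp
    | succ n ih =>
      rw [pow_succ, MulAut.mul_apply, hγgg, map_mul, ih, ← hγpow g n,
        hZ (g ^ n) c hcZ, mul_assoc, ← pow_succ]
  have hgn : ∀ n : ℕ, γ g (g ^ n) = g ^ n * c ^ n := by
    intro n
    induction n with
    | zero => simp
    | succ n ih =>
      rw [pow_succ, map_mul, ih, hγgg]
      have h := hmix (g ^ n) g n 1
      rw [pow_one] at h
      rw [h, ← pow_succ]
  have key : ∀ n : ℕ, (ν g) ^ n = ν (g ^ n * c ^ n.choose 2) := by
    intro n
    induction n with
    | zero => simpa using hν1.symm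
    | succ n ih =>
      rw [pow_succ, ih]
      ext x
      simp only [Equiv.Perm.mul_apply, hνapp]
      rw [hγm, hγm, map_mul, hgc n]
      rw [show ((γ g) ^ n) ((γ g) x) = ((γ g) ^ (n + 1)) x from by
        rw [pow_succ, MulAut.mul_apply]]
      rw [← mul_assoc _ g (c ^ n), hmix, mul_assoc _ g (g ^ n), ← pow_succ',
        mul_assoc,
        show n + n.choose 2 = (n + 1).choose 2 from by
          rw [Nat.choose_succ_succ, Nat.choose_one_right]]
  have hm_odd : Odd (orderOf g) := by
    obtain ⟨n0, hn0⟩ := hpG g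
    have hdvd : orderOf g ∣ p ^ n0 := orderOf_dvd_of_pow_eq_one hn0
    have hpn : Odd (p ^ n0) := hodd.pow
    by_contra hcon
    rw [Nat.not_odd_iff_even] at hcon
    have h2d : (2 : ℕ) ∣ p ^ n0 := dvd_trans hcon.two_dvd hdvd
    rw [Nat.odd_iff] at hpn
    omega
  have hcm : c ^ orderOf g = 1 := by
    have h1 := hgn (orderOf g)
    rw [pow_orderOf_eq_one, map_one, one_mul] at h1
    exact h1.symm
  have hA : orderOf (ν g) ∣ orderOf g := by
    apply orderOf_dvd_of_pow_eq_one
    rw [key (orderOf g), pow_orderOf_eq_one, one_mul]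
    obtain ⟨t, ht⟩ := hchoose (orderOf g) hm_odd
    rw [ht, pow_mul, hcm, one_pow, hν1]
  have hd_odd : Odd (orderOf (ν g)) := by
    obtain ⟨t, ht⟩ := hA
    rw [ht] at hm_odd
    exact (Nat.odd_mul.mp hm_odd).1
  have heq : g ^ orderOf (ν g) * c ^ (orderOf (ν g)).choose 2 = 1 := by
    apply hinj
    rw [← key, pow_orderOf_eq_one, hν1]
  have hcd : c ^ orderOf (ν g) = 1 := by
    have hcent' : g ^ orderOf (ν g) ∈ Subgroup.center G := by
      have h1 : g ^ orderOf (ν g) = (c ^ (orderOf (ν g)).choose 2)⁻¹ := by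
        rw [eq_inv_iff_mul_eq_one]; exact heq
      rw [h1]; exact inv_mem (hcZk _)
    have h1 := hgn (orderOf (ν g))
    rw [hZ g _ hcent'] at h1
    exact (left_eq_mul.mp h1).symm ▸ rfl
  have hB : orderOf g ∣ orderOf (ν g) := by
    apply orderOf_dvd_of_pow_eq_one
    obtain ⟨t, ht⟩ := hchoose _ hd_odd
    rw [ht, pow_mul, hcd, one_pow, mul_one] at heq
    exact heq
  exact ⟨key, Nat.dvd_antisymm hA hB⟩
end

section
/- Let G be a group of nilpotency class two of odd exponent, d an integer coprime to the exponent of G, and θ_d : G → G the d-th power map x ↦ x^d. Then θ_d is a bijection and for all g ∈ G, conjugation of ρ(g) by θ_d in Perm(G) satisfies ρ(g)^{θ_d} = ι(g^{(1-d)/2}) ∘ ρ(g^d), where ι(x) denotes inner automorphism by x and (1-d)/2 is computed modulo the exponent. -/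
private lemma move_lemma {G : Type*} [Group G] (c g x : G)
    (hc : ∀ z : G, Commute c z) (h : g * x = c * x * g) :
    ∀ n : ℕ, g ^ n * x = c ^ n * x * g ^ n := by
  intro n
  induction n with
  | zero => simp
  | succ n ih =>
    calc g ^ (n+1) * x = g ^ n * (g * x) := by rw [pow_succ, mul_assoc]
      _ = g ^ n * (c * x * g) := by rw [h]
      _ = g ^ n * c * x * g := by simp [mul_assoc]
      _ = c * (g ^ n * x) * g := by rw [← (hc (g ^ n)).eq]; simp [mul_assoc]
      _ = c * (c ^ n * x * g ^ n) * g := by rw [ih]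
      _ = c ^ (n+1) * x * g ^ (n+1) := by
          rw [pow_succ' c, pow_succ g]; simp [mul_assoc]

private lemma central_move {G : Type*} [Group G] (c : G) (hc : ∀ z : G, Commute c z)
    (k : ℕ) (a b : G) : a * c ^ k * b = a * b * c ^ k := by
  rw [mul_assoc, mul_assoc, ((hc b).pow_left k).eq]

private lemma pow_formula {G : Type*} [Group G] (c g x : G)
    (hc : ∀ z : G, Commute c z) (h : g * x = c * x * g) :
    ∀ n : ℕ, (x * g) ^ n = x ^ n * g ^ n * c ^ (n * (n-1) / 2) := by
  intro n
  induction n with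
  | zero => simp
  | succ n ih =>
    have harith : (n+1) * ((n+1) - 1) / 2 = n * (n-1) / 2 + n := by
      rcases Nat.eq_zero_or_pos n with hn | hn
      · subst hn; rfl
      · obtain ⟨m, rfl⟩ : ∃ m, n = m + 1 := ⟨n - 1, by omega⟩
        have h1 : (m+1+1) * (m+1) = (m+1) * m + 2 * (m+1) := by ring
        simp only [Nat.add_sub_cancel, h1]
        rw [Nat.add_mul_div_left _ _ (by norm_num : (0:ℕ) < 2)]
    rw [harith]
    calc (x*g) ^ (n+1) = (x*g)^n * (x*g) := by rw [pow_succ]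
      _ = x^n * g^n * c ^ (n*(n-1)/2) * (x * g) := by rw [ih]
      _ = x^n * (g^n * x) * g * c ^ (n*(n-1)/2) := by
          rw [mul_assoc, ((hc (x*g)).pow_left (n*(n-1)/2)).eq]; simp [mul_assoc]
      _ = x^n * (c^n * x * g^n) * g * c ^ (n*(n-1)/2) := by rw [move_lemma c g x hc h n]
      _ = x^(n+1) * g^(n+1) * (c ^ (n*(n-1)/2) * c ^ n) := by
          simp only [pow_succ, ← mul_assoc]
          rw [central_move c hc n (x^n) x, central_move c hc n (x^n*x) (g^n),
            central_move c hc n (x^n*x*g^n) g,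
            central_move c hc n (x^n*x*g^n*g) (c ^ (n*(n-1)/2))]
      _ = x^(n+1) * g^(n+1) * c ^ (n*(n-1)/2 + n) := by rw [pow_add c]

open scoped commutatorElement in
/-- Let `G` be a group of nilpotency class two of odd exponent, `d` coprime to
the exponent, and `e` a representative of `(1-d)/2` modulo the exponent
(i.e. `x^(2e+d) = x` for all `x`). Then the `d`-th power map `θ_d` is a
bijection, and the conjugate `ρ(g)^{θ_d}` equals `ι(g^{(1-d)/2}) ∘ ρ(g^d)`;
precomposing with the bijection `θ_d`, this reads
`(x*g)^d = (g^e)⁻¹ * x^d * g^e * g^d` for all `x, g`. -/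
theorem stmt_9 (G : Type*) [Group G]
    (h2 : commutator G ≤ Subgroup.center G) (hnab : commutator G ≠ ⊥)
    (hodd : Odd (Monoid.exponent G))
    (d e : ℕ) (hd : Nat.Coprime d (Monoid.exponent G))
    (he : ∀ x : G, x ^ (2 * e + d) = x) :
    Function.Bijective (fun x : G => x ^ d) ∧
    ∀ g x : G, (x * g) ^ d = (g ^ e)⁻¹ * x ^ d * g ^ e * g ^ d := by
  have hexp_pos : 0 < Monoid.exponent G := by rcases hodd with ⟨k, hk⟩; omega
  have hexp_ne1 : Monoid.exponent G ≠ 1 := by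
    intro h1
    apply hnab
    have htriv : ∀ x : G, x = 1 := by
      intro x
      have hx := Monoid.pow_exponent_eq_one (G := G) x
      rwa [h1, pow_one] at hx
    haveI : Subsingleton G := ⟨fun a b => by rw [htriv a, htriv b]⟩
    exact Subgroup.eq_bot_of_subsingleton _
  have hd0 : d ≠ 0 := by
    intro h
    exact hexp_ne1 (Nat.coprime_zero_left _ |>.mp (h ▸ hd))
  have hexp_gt1 : 1 < Monoid.exponent G := by omega
  constructor
  · -- bijectivity
    obtain ⟨m, -, hm⟩ := Nat.exists_mul_mod_eq_one_of_coprime hd hexp_gt1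
    have hinv : ∀ x : G, x ^ (d * m) = x := by
      intro x
      conv_lhs => rw [← Nat.div_add_mod (d * m) (Monoid.exponent G)]
      rw [pow_add, pow_mul, Monoid.pow_exponent_eq_one, one_pow, one_mul, hm, pow_one]
    refine Function.bijective_iff_has_inverse.mpr ⟨fun y => y ^ m, ?_, ?_⟩
    · intro x; simp only [← pow_mul]; exact hinv x
    · intro x; simp only [← pow_mul, mul_comm m d]; exact hinv x
  · intro g x
    set c := ⁅g, x⁆ with hcdef
    have hc : ∀ z : G, Commute c z := by
      intro z
      have hmem : c ∈ commutator G := by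
        rw [commutator_def]
        exact Subgroup.commutator_mem_commutator (Subgroup.mem_top g) (Subgroup.mem_top x)
      exact (Subgroup.mem_center_iff.mp (h2 hmem) z).symm
    have hswap : g * x = c * x * g := by
      simp [hcdef, commutatorElement_def, mul_assoc]
    -- key order fact
    set M := d * (d-1) / 2 with hM
    have h2dvd : 2 ∣ d * (d - 1) := by
      obtain ⟨m, rfl⟩ : ∃ m, d = m + 1 := ⟨d - 1, by omega⟩
      simpa [Nat.add_sub_cancel, mul_comm] using (Nat.even_mul_succ_self m).two_dvd
    have hMeq : 2 * M = d * (d - 1) := Nat.mul_div_cancel' h2dvd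
    have harith : 2 * (M + d * e) = d * (2 * e + d - 1) := by
      have e1 : 2 * e + d - 1 = 2 * e + (d - 1) := by omega
      rw [e1, Nat.mul_add, Nat.mul_add, hMeq]
      ring
    have hc1 : c ^ (2 * e + d - 1) = 1 := by
      have h := he c
      have h' : c ^ (2 * e + d - 1) * c = 1 * c := by
        rw [← pow_succ, one_mul, show 2 * e + d - 1 + 1 = 2 * e + d by omega, h]
      exact mul_right_cancel h'
    have h2m : c ^ (2 * (M + d * e)) = 1 := by
      rw [harith, mul_comm d, pow_mul, hc1, one_pow]
    have hordodd : ¬ 2 ∣ orderOf c := by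
      intro hdvd
      have h2e : (2:ℕ) ∣ Monoid.exponent G := hdvd.trans (Monoid.order_dvd_exponent c)
      rcases hodd with ⟨k, hk⟩
      omega
    have hcop : Nat.Coprime (orderOf c) 2 :=
      ((Nat.prime_two.coprime_iff_not_dvd).mpr hordodd).symm
    have hdvdM : orderOf c ∣ M + d * e := by
      have h1 : orderOf c ∣ 2 * (M + d * e) := orderOf_dvd_of_pow_eq_one h2m
      exact hcop.dvd_of_dvd_mul_left h1
    have hkey : c ^ (M + d * e) = 1 := orderOf_dvd_iff_pow_eq_one.mp hdvdM
    -- conjugation formula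
    have hgx : g * x * g⁻¹ = c * x := by rw [hswap]; group
    have hgxd : g * x ^ d * g⁻¹ = c ^ d * x ^ d := by
      rw [← conj_pow, hgx, (hc x).mul_pow]
    have hgxd' : g * x ^ d = c ^ d * x ^ d * g := by
      have := hgxd
      calc g * x ^ d = (g * x ^ d * g⁻¹) * g := by group
        _ = c ^ d * x ^ d * g := by rw [hgxd]
    have hcd : ∀ z : G, Commute (c ^ d) z := fun z => (hc z).pow_left d
    have hmoved : g ^ e * x ^ d = (c ^ d) ^ e * x ^ d * g ^ e :=
      move_lemma (c ^ d) g (x ^ d) hcd hgxd' e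
    have hconj : (g ^ e)⁻¹ * x ^ d * g ^ e = ((c ^ d) ^ e)⁻¹ * x ^ d := by
      have h1 : x ^ d * g ^ e = ((c ^ d) ^ e)⁻¹ * (g ^ e * x ^ d) := by
        rw [hmoved]; group
      calc (g ^ e)⁻¹ * x ^ d * g ^ e = (g ^ e)⁻¹ * (x ^ d * g ^ e) := by rw [mul_assoc]
        _ = (g ^ e)⁻¹ * (((c ^ d) ^ e)⁻¹ * (g ^ e * x ^ d)) := by rw [h1]
        _ = (g ^ e)⁻¹ * (g ^ e * (((c ^ d) ^ e)⁻¹ * x ^ d)) := by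
            rw [← mul_assoc ((c ^ d) ^ e)⁻¹, (((hcd (g^e)).pow_left e).inv_left).eq, mul_assoc]
        _ = ((c ^ d) ^ e)⁻¹ * x ^ d := by group
    have hform : (x * g) ^ d = x ^ d * g ^ d * c ^ M :=
      pow_formula c g x hc hswap d
    rw [hform, hconj]
    have hKinv : ((c ^ d) ^ e)⁻¹ = c ^ M := by
      rw [← pow_mul, eq_comm, eq_inv_iff_mul_eq_one, ← pow_add]
      exact hkey
    rw [hKinv]
    have hcomm : Commute (c ^ M) (x ^ d * g ^ d) := (hc _).pow_left M
    rw [mul_assoc (c ^ M)]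
    exact hcomm.eq.symm
end

section
/- Let G be a group of class two of odd exponent and d coprime to exp(G). Then the power bijection θ_d : x ↦ x^d commutes with every automorphism of G (as permutations of G) and normalizes Hol(G) = Aut(G)·ρ(G) inside Perm(G). -/
open scoped commutatorElement

theorem Equiv.Perm.inv_apply_self {α : Type*} (f : Equiv.Perm α) (x : α) : f⁻¹ (f x) = x :=
  f.symm_apply_apply x

theorem Equiv.Perm.apply_inv_self {α : Type*} (f : Equiv.Perm α) (x : α) : f (f⁻¹ x) = x :=
  f.apply_symm_apply x

section Aux

variable {G : Type*} [Group G]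

lemma aux_comm (h2 : commutator G ≤ Subgroup.center G) (a b g : G) :
    ⁅a, b⁆ * g = g * ⁅a, b⁆ := by
  have : ⁅a, b⁆ ∈ Subgroup.center G := h2 (by
    rw [commutator_def]
    exact Subgroup.commutator_mem_commutator (Subgroup.mem_top a) (Subgroup.mem_top b))
  exact (Subgroup.mem_center_iff.mp this g).symm

variable (hc : ∀ a b g : G, ⁅a, b⁆ * g = g * ⁅a, b⁆)
include hc

lemma aux_commpow (a b g : G) (k : ℕ) : ⁅a, b⁆ ^ k * g = g * ⁅a, b⁆ ^ k :=
  ((show Commute ⁅a, b⁆ g from hc a b g).pow_left k)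

lemma aux_comm_mul (h x y : G) : ⁅h, x * y⁆ = ⁅h, x⁆ * ⁅h, y⁆ := by
  have key : ⁅h, x * y⁆ = ⁅h, x⁆ * (x * ⁅h, y⁆ * x⁻¹) := by
    simp only [commutatorElement_def]; group
  rw [key, ← hc h y x, mul_inv_cancel_right]

lemma aux_comm_pow (h x : G) (k : ℕ) : ⁅h, x ^ k⁆ = ⁅h, x⁆ ^ k := by
  induction k with
  | zero => simp
  | succ k ih => rw [pow_succ, aux_comm_mul hc, ih, pow_succ]

lemma aux_swap (a b : G) (k : ℕ) : b ^ k * a = ⁅b, a⁆ ^ k * a * b ^ k := by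
  induction k with
  | zero => simp
  | succ k ih =>
    have hba : b * a = ⁅b, a⁆ * a * b := by
      simp only [commutatorElement_def]; group
    calc b ^ (k + 1) * a = b * (b ^ k * a) := by rw [pow_succ']; group
      _ = b * (⁅b, a⁆ ^ k * (a * b ^ k)) := by rw [ih]; group
      _ = ⁅b, a⁆ ^ k * (b * (a * b ^ k)) := by
          rw [← mul_assoc b, ← aux_commpow hc b a b k, mul_assoc]
      _ = ⁅b, a⁆ ^ k * ((⁅b, a⁆ * a * b) * b ^ k) := by
          rw [← mul_assoc b a, hba]
      _ = ⁅b, a⁆ ^ (k + 1) * a * b ^ (k + 1) := by rw [pow_succ, pow_succ]; group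

lemma aux_mul_pow (a b : G) (k : ℕ) :
    (a * b) ^ k = a ^ k * b ^ k * ⁅b, a⁆ ^ (k.choose 2) := by
  induction k with
  | zero => simp
  | succ k ih =>
    have hch : (k + 1).choose 2 = k.choose 2 + k := by
      rw [Nat.choose_succ_succ, Nat.choose_one_right, Nat.add_comm]
    have hz := aux_commpow hc b a
    calc (a * b) ^ (k + 1)
        = a ^ k * (b ^ k * (⁅b, a⁆ ^ k.choose 2 * (a * b))) := by
          rw [pow_succ, ih]; group
      _ = a ^ k * (b ^ k * (a * (b * ⁅b, a⁆ ^ k.choose 2))) := by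
          rw [hz (a * b) (k.choose 2)]; group
      _ = a ^ k * (⁅b, a⁆ ^ k * (a * (b ^ k * (b * ⁅b, a⁆ ^ k.choose 2)))) := by
          rw [← mul_assoc (b ^ k), aux_swap hc a b k]; group
      _ = a ^ k * ((a * (b ^ k * (b * ⁅b, a⁆ ^ k.choose 2))) * ⁅b, a⁆ ^ k) := by
          rw [hz _ k]
      _ = a ^ (k + 1) * b ^ (k + 1) * ⁅b, a⁆ ^ ((k + 1).choose 2) := by
          rw [hch, pow_succ a, pow_succ b, pow_add]; group

omit hc in
lemma aux_memR (π : Equiv.Perm G) :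
    π ∈ Subgroup.closure (Set.range fun g : G => (Equiv.mulRight g : Equiv.Perm G)) ↔
      ∃ g : G, π = Equiv.mulRight g := by
  constructor
  · intro h
    refine Subgroup.closure_induction ?_ ?_ ?_ ?_ h
    · rintro x ⟨g, rfl⟩; exact ⟨g, rfl⟩
    · exact ⟨1, Equiv.ext fun x => (mul_one x).symm⟩
    · rintro x y - - ⟨g, rfl⟩ ⟨g', rfl⟩
      exact ⟨g' * g, Equiv.ext fun z => by
        simp [Equiv.Perm.mul_apply, mul_assoc]⟩
    · rintro x - ⟨g, rfl⟩
      refine ⟨g⁻¹, ?_⟩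
      ext z
      simp
  · rintro ⟨g, rfl⟩; exact Subgroup.subset_closure ⟨g, rfl⟩

end Aux

/-- Let `G` be a group of class two of odd exponent and `d` coprime to
`exp(G)`. Then the power bijection `θ_d : x ↦ x^d` commutes, as a permutation
of `G`, with every automorphism of `G`, and normalizes
`Hol(G) = N_{Perm G}(ρ(G))` inside `Perm G`. -/
theorem stmt_10 (G : Type*) [Group G]
    (h2 : commutator G ≤ Subgroup.center G) (hnab : commutator G ≠ ⊥)
    (hodd : Odd (Monoid.exponent G))
    (d : ℕ) (hd : Nat.Coprime d (Monoid.exponent G))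
    (θ : Equiv.Perm G) (hθ : ∀ x : G, θ x = x ^ d) :
    (∀ α : MulAut G, (α.toEquiv : Equiv.Perm G) * θ = θ * (α.toEquiv : Equiv.Perm G)) ∧
    θ ∈ Subgroup.normalizer (Subgroup.normalizer ((Subgroup.closure
        (Set.range fun g : G => (Equiv.mulRight g : Equiv.Perm G))) : Set (Equiv.Perm G)) : Set (Equiv.Perm G)) := by
  have hc : ∀ a b g : G, ⁅a, b⁆ * g = g * ⁅a, b⁆ := aux_comm h2
  set n := Monoid.exponent G with hn
  -- exponent is > 1
  have hn0 : n ≠ 0 := by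
    intro h
    rw [h] at hodd
    simpa using hodd
  have hn1' : n ≠ 1 := by
    intro h
    have hall : ∀ x : G, x = 1 := fun x => by
      have hx := Monoid.pow_exponent_eq_one x
      rwa [← hn, h, pow_one] at hx
    exact hnab ((Subgroup.eq_bot_iff_forall _).mpr fun x _ => hall x)
  have hn1 : 1 < n := Nat.one_lt_iff_ne_zero_and_ne_one.mpr ⟨hn0, hn1'⟩
  obtain ⟨c, -, hcm⟩ := Nat.exists_mul_mod_eq_one_of_coprime hd hn1
  have hmod : d * c ≡ 1 [MOD n] := by
    show d * c % n = 1 % n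
    rw [hcm, Nat.mod_eq_of_lt hn1]
  have hmod' : c * d ≡ 1 [MOD n] := by rwa [Nat.mul_comm] at hmod
  have hpow : ∀ (x : G) (a b : ℕ), a ≡ b [MOD n] → x ^ a = x ^ b := fun x a b h =>
    pow_eq_pow_iff_modEq.mpr (Nat.ModEq.of_dvd (Monoid.order_dvd_exponent x) h)
  have hsymm : ∀ x : G, θ⁻¹ x = x ^ c := by
    intro x
    have hx : θ (x ^ c) = x := by
      rw [hθ, ← pow_mul, hpow x (c * d) 1 hmod', pow_one]
    have := congrArg (θ⁻¹ : Equiv.Perm G) hx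
    rw [Equiv.Perm.inv_apply_self] at this
    exact this.symm
  -- Part 1
  have part1 : ∀ α : MulAut G,
      (α.toEquiv : Equiv.Perm G) * θ = θ * (α.toEquiv : Equiv.Perm G) := by
    intro α
    ext x
    simp only [Equiv.Perm.mul_apply]
    show α (θ x) = θ (α x)
    rw [hθ, hθ, map_pow]
  refine ⟨part1, ?_⟩
  -- Part 2
  set R := Subgroup.closure (Set.range fun g : G => (Equiv.mulRight g : Equiv.Perm G)) with hR
  have memR : ∀ π : Equiv.Perm G, π ∈ R ↔ ∃ g : G, π = Equiv.mulRight g := by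
    rw [hR]; exact fun π => aux_memR π
  set Q : Equiv.Perm G → Prop := fun σ => ∀ x y : G, σ (x * y) = σ x * (σ 1)⁻¹ * σ y with hQdef
  -- normalizer elements satisfy Q
  have hQN : ∀ η : Equiv.Perm G, η ∈ Subgroup.normalizer (R : Set (Equiv.Perm G)) → Q η := by
    intro η hη x y
    have h1 := (Subgroup.mem_normalizer_iff.mp hη (Equiv.mulRight y)).mp (memR _ |>.mpr ⟨y, rfl⟩)
    obtain ⟨g', hg'⟩ := (memR _).mp h1
    have hpt : ∀ z : G, η (η⁻¹ z * y) = z * g' := by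
      intro z
      have := congrArg (fun e : Equiv.Perm G => e z) hg'
      simpa [Equiv.Perm.mul_apply] using this
    have e1 := hpt (η 1)
    rw [Equiv.Perm.inv_apply_self, one_mul] at e1
    have e2 := hpt (η x)
    rw [Equiv.Perm.inv_apply_self] at e2
    rw [e2, e1]
    group
  -- Q is preserved by inversion
  have hQinv : ∀ σ : Equiv.Perm G, Q σ → Q σ⁻¹ := by
    intro σ hQ x y
    apply σ.injective
    have hb : σ ((σ⁻¹ 1)⁻¹) = σ 1 * σ 1 := by
      have h0 := hQ ((σ⁻¹ 1)⁻¹) (σ⁻¹ 1)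
      rw [inv_mul_cancel, Equiv.Perm.apply_inv_self] at h0
      have : σ 1 * 1⁻¹ * (σ 1)⁻¹⁻¹ = σ ((σ⁻¹ 1)⁻¹) * (σ 1)⁻¹ * 1 * 1⁻¹ * (σ 1)⁻¹⁻¹ := by
        rw [← h0]
      simpa [mul_assoc] using this.symm
    show σ (σ⁻¹ (x * y)) = σ (σ⁻¹ x * (σ⁻¹ 1)⁻¹ * σ⁻¹ y)
    rw [Equiv.Perm.apply_inv_self, hQ (σ⁻¹ x * (σ⁻¹ 1)⁻¹) (σ⁻¹ y),
      hQ (σ⁻¹ x) ((σ⁻¹ 1)⁻¹), hb, Equiv.Perm.apply_inv_self, Equiv.Perm.apply_inv_self]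
    group
  -- conjugation formula
  have conj : ∀ σ : Equiv.Perm G, Q σ → ∀ g : G,
      σ * Equiv.mulRight g * σ⁻¹ = Equiv.mulRight ((σ 1)⁻¹ * σ g) := by
    intro σ hQ g
    ext z
    show σ (σ⁻¹ z * g) = z * ((σ 1)⁻¹ * σ g)
    rw [hQ, Equiv.Perm.apply_inv_self, mul_assoc]
  -- Q implies membership in the normalizer
  have hQmem : ∀ σ : Equiv.Perm G, Q σ → σ ∈ Subgroup.normalizer (R : Set (Equiv.Perm G)) := by
    intro σ hQ
    rw [Subgroup.mem_normalizer_iff]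
    intro π
    constructor
    · intro hπ
      obtain ⟨g, rfl⟩ := (memR _).mp hπ
      rw [conj σ hQ g]
      exact (memR _).mpr ⟨_, rfl⟩
    · intro hπ
      obtain ⟨g, hg⟩ := (memR _).mp hπ
      have hπ' : π = σ⁻¹ * Equiv.mulRight g * σ := by rw [← hg]; group
      have := conj σ⁻¹ (hQinv σ hQ) g
      rw [inv_inv] at this
      rw [hπ', this]
      exact (memR _).mpr ⟨_, rfl⟩
  -- main step
  have main : ∀ (σ : Equiv.Perm G) (m m' : ℕ), (∀ x, σ x = x ^ m) → (∀ x, σ⁻¹ x = x ^ m') →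
      m' * m ≡ 1 [MOD n] → ∀ η : Equiv.Perm G, η ∈ Subgroup.normalizer (R : Set (Equiv.Perm G)) →
      σ * η * σ⁻¹ ∈ Subgroup.normalizer (R : Set (Equiv.Perm G)) := by
    intro σ m m' hσ hσ' hmm η hη
    have Qη := hQN η hη
    set h := η 1 with hh
    set β : G → G := fun x => η x * h⁻¹ with hβ
    have βmul : ∀ x y, β (x * y) = β x * β y := by
      intro x y
      show η (x * y) * h⁻¹ = η x * h⁻¹ * (η y * h⁻¹)
      rw [Qη x y, ← hh]
      group
    have β1 : β 1 = 1 := by show η 1 * h⁻¹ = 1; rw [← hh, mul_inv_cancel]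
    have βpow : ∀ (x : G) (k : ℕ), β (x ^ k) = β x ^ k := by
      intro x k
      induction k with
      | zero => simpa using β1
      | succ k ih => rw [pow_succ, βmul, ih, pow_succ]
    set k := m' * Nat.choose m 2 with hk
    have τform : ∀ x : G, (σ * η * σ⁻¹) x = β x * h ^ m * ⁅h, β x⁆ ^ k := by
      intro x
      show σ (η (σ⁻¹ x)) = _
      rw [hσ' x, hσ]
      have hη' : η (x ^ m') = β (x ^ m') * h := by
        show η (x ^ m') = η (x ^ m') * h⁻¹ * h
        group
      rw [hη', βpow, aux_mul_pow hc, ← pow_mul, hpow (β x) (m' * m) 1 hmm, pow_one,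
        aux_comm_pow hc, ← pow_mul, hk]
    refine hQmem _ ?_
    intro x y
    have t1 : (σ * η * σ⁻¹) 1 = h ^ m := by
      rw [τform, β1, commutatorElement_one_right, one_pow, mul_one, one_mul]
    rw [τform (x * y), τform x, τform y, t1, βmul, aux_comm_mul hc,
      ((show Commute ⁅h, β x⁆ ⁅h, β y⁆ from hc h (β x) ⁅h, β y⁆).mul_pow k)]
    simp only [mul_assoc]
    rw [aux_commpow hc h (β x) ((h ^ m)⁻¹ * (β y * (h ^ m * ⁅h, β y⁆ ^ k))) k]
    simp only [mul_assoc]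
    rw [aux_commpow hc h (β y) (⁅h, β x⁆ ^ k) k, mul_inv_cancel_left]
  -- conclude
  rw [Subgroup.mem_normalizer_iff]
  intro η
  constructor
  · intro hη
    exact main θ d c hθ hsymm hmod' η hη
  · intro hη
    have hinv : ∀ x : G, (θ⁻¹)⁻¹ x = x ^ d := by intro x; rw [inv_inv]; exact hθ x
    have := main θ⁻¹ c d hsymm hinv hmod (θ * η * θ⁻¹) hη
    have heq : θ⁻¹ * (θ * η * θ⁻¹) * θ⁻¹⁻¹ = η := by group
    rwa [heq] at this
end

section
/- Let G be a finite p-group of class two, p odd, with exp(G/Z(G)) = p^r. Then the group T(G) = N_{Perm(G)}(Hol(G)) / Hol(G) contains a cyclic subgroup of order φ(p^r) = (p-1)·p^{r-1}; in particular T(G) contains an element of order p−1. -/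
/-- The image of the right regular representation, as a subgroup of `Perm G`. -/
def rhoSubgroup (G : Type*) [Group G] : Subgroup (Equiv.Perm G) :=
  Subgroup.closure (Set.range fun g : G => (Equiv.mulRight g : Equiv.Perm G))

/-- The holomorph `Hol(G) = N_{Perm G}(ρ(G))`. -/
def holSubgroup (G : Type*) [Group G] : Subgroup (Equiv.Perm G) :=
  Subgroup.normalizer (rhoSubgroup G : Set (Equiv.Perm G))

section Aux
variable {G : Type*} [Group G]

lemma mulRight_mem_rho (g : G) :
    (Equiv.mulRight g : Equiv.Perm G) ∈ rhoSubgroup G :=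
  Subgroup.subset_closure ⟨g, rfl⟩

lemma mulRight_mul (a b : G) :
    (Equiv.mulRight a : Equiv.Perm G) * Equiv.mulRight b = Equiv.mulRight (b * a) := by
  ext x
  simp [Equiv.Perm.mul_apply, mul_assoc]

lemma mem_rho_iff {π : Equiv.Perm G} :
    π ∈ rhoSubgroup G ↔ ∃ g, π = Equiv.mulRight g := by
  constructor
  · intro h
    refine Subgroup.closure_induction ?_ ?_ ?_ ?_ h
    · rintro x ⟨g, rfl⟩; exact ⟨g, rfl⟩
    · exact ⟨1, by ext x; simp⟩
    · rintro x y _ _ ⟨a, rfl⟩ ⟨b, rfl⟩; exact ⟨b * a, mulRight_mul a b⟩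
    · rintro x _ ⟨a, rfl⟩; exact ⟨a⁻¹, by rw [← Equiv.mulRight_symm]; rfl⟩
  · rintro ⟨g, rfl⟩; exact mulRight_mem_rho g

/-- Characterization of the holomorph as affine maps. -/
lemma mem_hol_iff {f : Equiv.Perm G} :
    f ∈ holSubgroup G ↔ ∃ (α : G ≃* G) (g : G), ∀ x, f x = α x * g := by
  constructor
  · intro hf
    rw [holSubgroup, Subgroup.mem_normalizer_iff] at hf
    have key : ∀ x y : G, f (x * y) = f x * (f 1)⁻¹ * f y := by
      intro x y
      obtain ⟨k, hk⟩ := mem_rho_iff.mp ((hf (Equiv.mulRight y)).mp (mulRight_mem_rho y))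
      have h1 := congrArg (fun σ : Equiv.Perm G => σ (f 1)) hk
      have h2 := congrArg (fun σ : Equiv.Perm G => σ (f x)) hk
      simp only [Equiv.Perm.mul_apply, Equiv.coe_mulRight, Equiv.Perm.inv_def, Equiv.symm_apply_apply] at h1 h2
      rw [one_mul] at h1
      have hk2 : k = (f 1)⁻¹ * f y := by rw [h1]; group
      rw [h2, hk2]
      group
    refine ⟨MulEquiv.mk (f.trans (Equiv.mulRight (f 1)⁻¹)) ?_, f 1, ?_⟩
    · intro x y
      simp only [Equiv.toFun_as_coe, Equiv.trans_apply, Equiv.coe_mulRight]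
      rw [key x y]
      group
    · intro x
      simp only [MulEquiv.coe_mk, Equiv.trans_apply, Equiv.coe_mulRight]
      group
  · rintro ⟨α, g, hfa⟩
    rw [holSubgroup, Subgroup.mem_normalizer_iff]
    intro h
    have hfsymm : ∀ y, f.symm y = α.symm (y * g⁻¹) := by
      intro y
      apply f.injective
      rw [Equiv.apply_symm_apply, hfa, MulEquiv.apply_symm_apply]
      group
    constructor
    · intro hh
      obtain ⟨k, rfl⟩ := mem_rho_iff.mp hh
      have : f * Equiv.mulRight k * f⁻¹ = Equiv.mulRight (g⁻¹ * α k * g) := by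
        ext y
        simp only [Equiv.Perm.mul_apply, Equiv.coe_mulRight, Equiv.Perm.inv_def]
        rw [hfsymm, hfa, map_mul, MulEquiv.apply_symm_apply]
        group
      rw [this]; exact mulRight_mem_rho _
    · intro hh
      obtain ⟨k, hk⟩ := mem_rho_iff.mp hh
      have : h = Equiv.mulRight (α.symm (g * k * g⁻¹)) := by
        have : h = f⁻¹ * (f * h * f⁻¹) * f := by group
        rw [this, hk]
        ext y
        simp only [Equiv.Perm.mul_apply, Equiv.coe_mulRight, Equiv.Perm.inv_def]
        rw [hfsymm, hfa]
        have : α y * g * k * g⁻¹ = α y * (g * k * g⁻¹) := by group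
        rw [this, map_mul, MulEquiv.symm_apply_apply]
      rw [this]; exact mulRight_mem_rho _

end Aux


section Class2
variable {G : Type*} [Group G]
open scoped commutatorElement

lemma hcomm (h2 : commutator G ≤ Subgroup.center G) (a b z : G) :
    Commute ⁅a, b⁆ z := by
  have : ⁅a, b⁆ ∈ Subgroup.center G := by
    apply h2
    rw [commutator_def]
    exact Subgroup.commutator_mem_commutator (Subgroup.mem_top a) (Subgroup.mem_top b)
  exact ((Subgroup.mem_center_iff.mp this z)).symm

lemma central_shuffle {c : G} (hc : ∀ z : G, Commute c z) (a b : G) :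
    a * (c * b) = c * (a * b) := by
  rw [← mul_assoc, ← (hc a).eq, mul_assoc]

lemma swap_base (g x : G) : g * x = ⁅g, x⁆ * x * g := by
  rw [commutatorElement_def]; group

lemma comm_mul_right (h2 : commutator G ≤ Subgroup.center G) (g x y : G) :
    ⁅g, x * y⁆ = ⁅g, x⁆ * ⁅g, y⁆ := by
  calc ⁅g, x * y⁆ = g * x * g⁻¹ * (⁅g, y⁆ * x⁻¹) := by
        simp only [commutatorElement_def]; group
  _ = ⁅g, y⁆ * (g * x * g⁻¹ * x⁻¹) := central_shuffle (hcomm h2 g y) _ _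
  _ = ⁅g, y⁆ * ⁅g, x⁆ := by simp only [commutatorElement_def]
  _ = ⁅g, x⁆ * ⁅g, y⁆ := ((hcomm h2 g x _).eq).symm

lemma comm_mul_left (h2 : commutator G ≤ Subgroup.center G) (g h x : G) :
    ⁅g * h, x⁆ = ⁅g, x⁆ * ⁅h, x⁆ := by
  calc ⁅g * h, x⁆ = g * (⁅h, x⁆ * (x * g⁻¹ * x⁻¹)) := by
        simp only [commutatorElement_def]; group
  _ = ⁅h, x⁆ * (g * (x * g⁻¹ * x⁻¹)) := central_shuffle (hcomm h2 h x) _ _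
  _ = ⁅h, x⁆ * ⁅g, x⁆ := by simp only [commutatorElement_def]; group
  _ = ⁅g, x⁆ * ⁅h, x⁆ := ((hcomm h2 g x _).eq).symm

lemma comm_pow_right (h2 : commutator G ≤ Subgroup.center G) (g x : G) :
    ∀ n : ℕ, ⁅g, x ^ n⁆ = ⁅g, x⁆ ^ n
  | 0 => by simp
  | n + 1 => by rw [pow_succ, comm_mul_right h2, comm_pow_right h2 g x n, pow_succ]

lemma comm_pow_left (h2 : commutator G ≤ Subgroup.center G) (g x : G) :
    ∀ n : ℕ, ⁅g ^ n, x⁆ = ⁅g, x⁆ ^ n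
  | 0 => by simp
  | n + 1 => by rw [pow_succ, comm_mul_left h2, comm_pow_left h2 g x n, pow_succ]

lemma pow_swap (h2 : commutator G ≤ Subgroup.center G) (g x : G) :
    ∀ n : ℕ, g ^ n * x = ⁅g, x⁆ ^ n * x * g ^ n
  | 0 => by simp
  | n + 1 => by
    have hc : ∀ z : G, Commute (⁅g, x⁆ ^ n) z := fun z => (hcomm h2 g x z).pow_left n
    calc g ^ (n + 1) * x = g * (g ^ n * x) := by rw [pow_succ']; group
    _ = g * (⁅g, x⁆ ^ n * (x * g ^ n)) := by rw [pow_swap h2 g x n]; group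
    _ = ⁅g, x⁆ ^ n * (g * (x * g ^ n)) := central_shuffle hc _ _
    _ = ⁅g, x⁆ ^ n * ((g * x) * g ^ n) := by group
    _ = ⁅g, x⁆ ^ n * ((⁅g, x⁆ * x * g) * g ^ n) := by rw [← swap_base g x]
    _ = ⁅g, x⁆ ^ (n + 1) * x * g ^ (n + 1) := by
        rw [pow_succ ⁅g, x⁆, pow_succ g]; group

lemma mul_pow_class2 (h2 : commutator G ≤ Subgroup.center G) (g x : G) :
    ∀ n : ℕ, (x * g) ^ n = ⁅g, x⁆ ^ (n.choose 2) * x ^ n * g ^ n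
  | 0 => by simp
  | n + 1 => by
    have hc : ∀ z : G, Commute (⁅g, x⁆ ^ n) z := fun z => (hcomm h2 g x z).pow_left n
    calc (x * g) ^ (n + 1) = (x * g) ^ n * (x * g) := pow_succ _ _
    _ = ⁅g, x⁆ ^ (n.choose 2) * x ^ n * (g ^ n * x) * g := by
        rw [mul_pow_class2 h2 g x n]; group
    _ = ⁅g, x⁆ ^ (n.choose 2) * x ^ n * (⁅g, x⁆ ^ n * x * g ^ n) * g := by
        rw [pow_swap h2 g x n]
    _ = ⁅g, x⁆ ^ (n.choose 2) * (x ^ n * (⁅g, x⁆ ^ n * (x * (g ^ n * g)))) := by group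
    _ = ⁅g, x⁆ ^ (n.choose 2) * (⁅g, x⁆ ^ n * (x ^ n * (x * (g ^ n * g)))) := by
        rw [central_shuffle hc]
    _ = ⁅g, x⁆ ^ (n.choose 2) * ⁅g, x⁆ ^ n * x ^ (n + 1) * g ^ (n + 1) := by group
    _ = ⁅g, x⁆ ^ ((n + 1).choose 2) * x ^ (n + 1) * g ^ (n + 1) := by
        rw [← pow_add, Nat.choose_succ_succ, Nat.choose_one_right, Nat.add_comm]

/-- The key identity: in a class-two group, `(x*g)^(2m+1) = g^m * x^(2m+1) * g^(m+1)`. -/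
lemma key_identity (h2 : commutator G ≤ Subgroup.center G) (g x : G) (m : ℕ) :
    (x * g) ^ (2 * m + 1) = g ^ m * x ^ (2 * m + 1) * g ^ (m + 1) := by
  have h1 : (2 * m + 1).choose 2 = m * (2 * m + 1) := by
    rw [Nat.choose_two_right]
    have : 2 * m + 1 - 1 = 2 * m := by omega
    rw [this, show (2 * m + 1) * (2 * m) = m * (2 * m + 1) * 2 by ring]
    exact Nat.mul_div_cancel _ (by norm_num)
  rw [mul_pow_class2 h2 g x, h1]
  have h3 : g ^ m * x ^ (2 * m + 1) = ⁅g, x⁆ ^ (m * (2 * m + 1)) * x ^ (2 * m + 1) * g ^ m := by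
    have := pow_swap h2 g (x ^ (2 * m + 1)) m
    rw [comm_pow_right h2, ← pow_mul, Nat.mul_comm (2 * m + 1) m] at this
    exact this
  rw [show g ^ m * x ^ (2 * m + 1) * g ^ (m + 1) = (g ^ m * x ^ (2 * m + 1)) * g ^ (m + 1) by group,
    h3]
  rw [show (2 : ℕ) * m + 1 = m + (m + 1) by ring]
  group

end Class2

section Theta
variable {G : Type*} [Group G]

lemma conj_mem_hol (h2 : commutator G ≤ Subgroup.center G) {π : Equiv.Perm G} {m e : ℕ}
    (hπ : ∀ x : G, π x = x ^ (2 * m + 1)) (hπs : ∀ x : G, π.symm x = x ^ e)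
    (hed : ∀ x : G, (x ^ e) ^ (2 * m + 1) = x)
    {f : Equiv.Perm G} (hf : f ∈ holSubgroup G) : π * f * π⁻¹ ∈ holSubgroup G := by
  obtain ⟨α, g, hfa⟩ := mem_hol_iff.mp hf
  apply mem_hol_iff.mpr
  refine ⟨α.trans (MulAut.conj (g ^ m)), g ^ (2 * m + 1), fun x => ?_⟩
  have : (π * f * π⁻¹) x = ((α (x ^ e)) * g) ^ (2 * m + 1) := by
    simp only [Equiv.Perm.mul_apply, Equiv.Perm.inv_def]
    rw [hπs, hfa, hπ]
  rw [this, key_identity h2 g (α (x ^ e)) m, ← map_pow, hed]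
  simp only [MulEquiv.trans_apply, MulAut.conj_apply]
  group

lemma theta_mem_normalizer (h2 : commutator G ≤ Subgroup.center G) {m mm : ℕ}
    (hde : ∀ x : G, (x ^ (2 * m + 1)) ^ (2 * mm + 1) = x)
    (hed : ∀ x : G, (x ^ (2 * mm + 1)) ^ (2 * m + 1) = x) :
    (⟨fun x => x ^ (2 * m + 1), fun x => x ^ (2 * mm + 1), hde, hed⟩ : Equiv.Perm G)
      ∈ Subgroup.normalizer (holSubgroup G : Set (Equiv.Perm G)) := by
  set θ : Equiv.Perm G := ⟨fun x => x ^ (2 * m + 1), fun x => x ^ (2 * mm + 1), hde, hed⟩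
  rw [Subgroup.mem_normalizer_iff]
  intro f
  constructor
  · intro hf
    exact conj_mem_hol h2 (fun x => rfl) (fun x => rfl) hed hf
  · intro hf
    have key := conj_mem_hol (π := θ⁻¹) (e := 2 * m + 1) h2
      (fun x => rfl) (fun x => rfl) hde hf
    have : θ⁻¹ * (θ * f * θ⁻¹) * θ⁻¹⁻¹ = f := by group
    rwa [this] at key

lemma perm_pow_apply {π : Equiv.Perm G} {D : ℕ} (hπ : ∀ x : G, π x = x ^ D) :
    ∀ (k : ℕ) (x : G), (π ^ k) x = x ^ (D ^ k)
  | 0, x => by simp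
  | k + 1, x => by
    rw [pow_succ', Equiv.Perm.mul_apply, hπ, perm_pow_apply hπ k, ← pow_mul, ← pow_succ]

lemma hol_mem_iff_center (h2 : commutator G ≤ Subgroup.center G) {π : Equiv.Perm G} {m : ℕ}
    (hπ : ∀ x : G, π x = x ^ (2 * m + 1)) :
    π ∈ holSubgroup G ↔ ∀ g : G, g ^ m ∈ Subgroup.center G := by
  constructor
  · intro hf
    obtain ⟨α, g₀, hfa⟩ := mem_hol_iff.mp hf
    have hg₀ : g₀ = 1 := by
      have h1 := hfa 1
      rw [hπ, one_pow, map_one, one_mul] at h1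
      exact h1.symm
    have hα : ∀ x : G, π x = α x := by
      intro x; rw [hfa, hg₀, mul_one]
    have hhom : ∀ x g : G, (x * g) ^ (2 * m + 1) = x ^ (2 * m + 1) * g ^ (2 * m + 1) := by
      intro x g
      rw [← hπ, ← hπ, ← hπ, hα, hα, hα, map_mul]
    intro g
    rw [Subgroup.mem_center_iff]
    intro y
    obtain ⟨x, rfl⟩ : ∃ x : G, x ^ (2 * m + 1) = y := ⟨π.symm y, by rw [← hπ, Equiv.apply_symm_apply]⟩
    have hk := key_identity h2 g x m
    rw [hhom] at hk
    have h5 : g ^ m * x ^ (2 * m + 1) * g ^ (m + 1)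
        = x ^ (2 * m + 1) * g ^ m * g ^ (m + 1) := by
      rw [← hk, mul_assoc, ← pow_add, show m + (m + 1) = 2 * m + 1 by omega]
    have h6 := mul_right_cancel h5
    rw [h6]
  · intro hz
    apply mem_hol_iff.mpr
    have map_mul' : ∀ x y : G, π (x * y) = π x * π y := by
      intro x y
      rw [hπ, hπ, hπ, key_identity h2 y x m]
      rw [← (Subgroup.mem_center_iff.mp (hz y) (x ^ (2 * m + 1)))]
      rw [mul_assoc, ← pow_add]
      congr 2
      omega
    exact ⟨MulEquiv.mk π map_mul', 1, fun x => by rw [mul_one]; rfl⟩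

end Theta


section NT
variable {p : ℕ}

/-- Core binomial step. -/
lemma nt_step (hp : p.Prime) (hp3 : 3 ≤ p) (k : ℕ) (s : ℤ) (hs : (p : ℤ) ∣ s - 1) :
    ∃ s' : ℤ, (p : ℤ) ∣ s' - 1 ∧ (1 + (p : ℤ) ^ (k + 1) * s) ^ p = 1 + (p : ℤ) ^ (k + 2) * s' := by
  obtain ⟨P, hP⟩ : ∃ P, p = P + 2 := ⟨p - 2, by omega⟩
  set a : ℤ := (p : ℤ) ^ (k + 1) * s with ha
  have expand : (1 + a) ^ p = ∑ i ∈ Finset.range (p + 1), a ^ i * (1 : ℤ) ^ (p - i) * p.choose i := by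
    rw [add_comm, add_pow]
  have hsum : ∑ i ∈ Finset.range (p + 1), a ^ i * (1 : ℤ) ^ (p - i) * p.choose i
      = (∑ i ∈ Finset.range (P + 1), a ^ (i + 2) * (1 : ℤ) ^ (p - (i + 2)) * p.choose (i + 2))
        + a ^ 1 * (1 : ℤ) ^ (p - 1) * p.choose 1 + a ^ 0 * (1 : ℤ) ^ (p - 0) * p.choose 0 := by
    rw [show p + 1 = (P + 2) + 1 by omega, Finset.sum_range_succ', Finset.sum_range_succ']
  have hdvd : ∀ i ∈ Finset.range (P + 1),
      ((p : ℤ) ^ (k + 3)) ∣ a ^ (i + 2) * (1 : ℤ) ^ (p - (i + 2)) * p.choose (i + 2) := by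
    intro i hi
    rw [Finset.mem_range] at hi
    rw [one_pow, mul_one]
    rcases lt_or_eq_of_le (by omega : i + 2 ≤ p) with hlt | heq
    · -- p ∣ choose
      obtain ⟨c, hc⟩ := Nat.Prime.dvd_choose_self hp (by omega) hlt
      have : a ^ (i + 2) * (p.choose (i + 2) : ℤ) =
          (p : ℤ) ^ ((k + 1) * (i + 2) + 1) * (s ^ (i + 2) * c) := by
        rw [ha, mul_pow, ← pow_mul, hc]
        push_cast
        ring
      rw [this]
      exact Dvd.dvd.mul_right (pow_dvd_pow _ (by nlinarith)) _
    · -- i + 2 = p : term is a ^ p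
      have : a ^ (i + 2) * (p.choose (i + 2) : ℤ) = (p:ℤ) ^ ((k+1)*(i+2)) * s ^ (i+2) := by
        rw [heq, Nat.choose_self]
        rw [ha, mul_pow, ← pow_mul]
        push_cast; ring
      rw [this]
      exact Dvd.dvd.mul_right (pow_dvd_pow _ (by nlinarith)) _
  obtain ⟨t, ht⟩ := Finset.dvd_sum hdvd
  refine ⟨s + p * t, ?_, ?_⟩
  · have : s + (p:ℤ) * t - 1 = (s - 1) + p * t := by ring
    rw [this]
    exact dvd_add hs ⟨t, rfl⟩
  · rw [expand, hsum, ht]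
    simp only [pow_zero, pow_one, one_pow, Nat.choose_zero_right, Nat.choose_one_right,
      Nat.cast_one, mul_one, one_mul]
    push_cast
    ring

lemma nt_pow (hp : p.Prime) (hp3 : 3 ≤ p) :
    ∀ k : ℕ, ∃ s : ℤ, (p : ℤ) ∣ s - 1 ∧ (1 + (p : ℤ)) ^ (p ^ k) = 1 + (p : ℤ) ^ (k + 1) * s
  | 0 => ⟨1, by simp, by simp⟩
  | k + 1 => by
    obtain ⟨s, hs1, hs2⟩ := nt_pow hp hp3 k
    obtain ⟨s', hs1', hs2'⟩ := nt_step hp hp3 k s hs1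
    refine ⟨s', hs1', ?_⟩
    rw [pow_succ, pow_mul, hs2, hs2']

lemma order_unit_one_add (hp : p.Prime) (hp3 : 3 ≤ p) {r : ℕ} (hr : 1 ≤ r) :
    ∃ b : (ZMod (p ^ r))ˣ, orderOf b = p ^ (r - 1) := by
  haveI : NeZero (p ^ r) := ⟨pow_ne_zero r hp.pos.ne'⟩
  have hco : Nat.Coprime (1 + p) (p ^ r) := by
    apply Nat.Coprime.pow_right
    rw [Nat.coprime_comm]
    refine (Nat.Prime.coprime_iff_not_dvd hp).mpr fun h => ?_
    have h2 := Nat.dvd_sub h (dvd_refl p)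
    rw [show 1 + p - p = 1 by omega] at h2
    have := Nat.le_of_dvd one_pos h2
    omega
  set b : (ZMod (p ^ r))ˣ := ZMod.unitOfCoprime (1 + p) hco with hbdef
  have hval : ∀ N : ℕ, ((b ^ N : (ZMod (p ^ r))ˣ) : ZMod (p ^ r))
      = (((1 + (p : ℤ)) ^ N : ℤ) : ZMod (p ^ r)) := by
    intro N
    rw [Units.val_pow_eq_pow_val, hbdef, ZMod.coe_unitOfCoprime]
    push_cast
    ring
  have pow1 : b ^ (p ^ (r - 1)) = 1 := by
    obtain ⟨s, _, hs2⟩ := nt_pow hp hp3 (r - 1)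
    rw [show r - 1 + 1 = r by omega] at hs2
    rw [Units.ext_iff, hval, hs2]
    push_cast
    rw [show ((p : ZMod (p ^ r)) ^ r) = ((p ^ r : ℕ) : ZMod (p ^ r)) by push_cast; ring,
      ZMod.natCast_self]
    simp
  have hdvd : orderOf b ∣ p ^ (r - 1) := orderOf_dvd_of_pow_eq_one pow1
  obtain ⟨j, hj, hb⟩ := (Nat.dvd_prime_pow hp).mp hdvd
  rcases eq_or_lt_of_le hj with h | h
  · exact ⟨b, by rw [hb, h]⟩
  · exfalso
    have hr2 : 2 ≤ r := by omega
    have pow2 : b ^ (p ^ (r - 2)) = 1 := by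
      apply orderOf_dvd_iff_pow_eq_one.mp
      rw [hb]
      exact pow_dvd_pow p (by omega)
    obtain ⟨s, hs1, hs2⟩ := nt_pow hp hp3 (r - 2)
    rw [show r - 2 + 1 = r - 1 by omega] at hs2
    rw [Units.ext_iff, hval, hs2] at pow2
    have hz : (((p : ℤ) ^ (r - 1) * s : ℤ) : ZMod (p ^ r)) = 0 := by
      push_cast at pow2 ⊢
      linear_combination pow2
    rw [ZMod.intCast_zmod_eq_zero_iff_dvd] at hz
    push_cast at hz
    rw [show ((p : ℤ) ^ r) = (p : ℤ) ^ (r - 1) * p by rw [← pow_succ]; congr 1; omega] at hz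
    have hps : (p : ℤ) ∣ s := by
      have hne : ((p : ℤ) ^ (r - 1)) ≠ 0 := pow_ne_zero _ (by exact_mod_cast hp.pos.ne')
      exact (mul_dvd_mul_iff_left hne).mp hz
    have hone : (p : ℤ) ∣ 1 := by
      have := dvd_sub hps hs1
      rw [show s - (s - 1) = 1 by ring] at this
      exact this
    have := Int.le_of_dvd one_pos hone
    have := hp.two_le
    omega

lemma exists_unit_order (hp : p.Prime) (hp3 : 3 ≤ p) {r : ℕ} (hr : 1 ≤ r) :
    ∃ u : (ZMod (p ^ r))ˣ, orderOf u = (p - 1) * p ^ (r - 1) := by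
  haveI : Fact p.Prime := ⟨hp⟩
  haveI : NeZero (p ^ r) := ⟨pow_ne_zero r hp.pos.ne'⟩
  obtain ⟨b, hb⟩ := order_unit_one_add hp hp3 hr
  -- generator mod p
  obtain ⟨g, hg⟩ := IsCyclic.exists_generator (α := (ZMod p)ˣ)
  have hgord : orderOf g = p - 1 := by
    rw [orderOf_eq_card_of_forall_mem_zpowers hg, Nat.card_eq_fintype_card, ZMod.card_units]
  obtain ⟨v, hv⟩ := ZMod.unitsMap_surjective (dvd_pow_self p (by omega : r ≠ 0)) g
  set w : (ZMod (p ^ r))ˣ := v ^ (p ^ (r - 1)) with hw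
  have hcop : Nat.Coprime (p - 1) (p ^ (r - 1)) := by
    apply Nat.Coprime.pow_right
    have : ¬ p ∣ (p - 1) := fun h => by
      have := Nat.le_of_dvd (by omega) h
      omega
    exact Nat.coprime_comm.mp ((Nat.Prime.coprime_iff_not_dvd hp).mpr this)
  have hword : orderOf w = p - 1 := by
    have hdvd1 : orderOf w ∣ p - 1 := by
      apply orderOf_dvd_of_pow_eq_one
      rw [hw, ← pow_mul]
      have hcard : p ^ (r - 1) * (p - 1) = Nat.card (ZMod (p ^ r))ˣ := by
        rw [Nat.card_eq_fintype_card, ZMod.card_units_eq_totient,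
          Nat.totient_prime_pow hp (by omega)]
      rw [hcard]
      exact pow_card_eq_one'
    have hdvd2 : p - 1 ∣ orderOf w := by
      have hmap : ZMod.unitsMap (dvd_pow_self p (by omega : r ≠ 0)) w = g ^ (p ^ (r - 1)) := by
        rw [hw, map_pow, hv]
      have : orderOf (g ^ (p ^ (r - 1))) = p - 1 := by
        rw [orderOf_pow' g (pow_ne_zero _ hp.pos.ne'), hgord, Nat.Coprime.gcd_eq_one hcop,
          Nat.div_one]
      calc p - 1 = orderOf (ZMod.unitsMap (dvd_pow_self p (by omega : r ≠ 0)) w) := by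
            rw [hmap, this]
      _ ∣ orderOf w := orderOf_map_dvd _ _
    exact Nat.dvd_antisymm hdvd1 hdvd2
  refine ⟨w * b, ?_⟩
  rw [(Commute.all w b).orderOf_mul_eq_mul_orderOf_of_coprime (by rw [hword, hb]; exact hcop),
    hword, hb]


section CenterPow
variable {G : Type*} [Group G]

lemma center_pow_iff {q : ℕ} (hq : Monoid.exponent (G ⧸ Subgroup.center G) = q) (M : ℕ) :
    (∀ g : G, g ^ M ∈ Subgroup.center G) ↔ q ∣ M := by
  constructor
  · intro hz
    rw [← hq]
    apply Monoid.exponent_dvd_of_forall_pow_eq_one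
    intro x
    induction x using QuotientGroup.induction_on with
    | H g =>
      have : ((g ^ M : G) : G ⧸ Subgroup.center G) = 1 :=
        (QuotientGroup.eq_one_iff _).mpr (hz g)
      rw [QuotientGroup.mk_pow] at this
      exact this
  · rintro ⟨c, rfl⟩ g
    rw [← QuotientGroup.eq_one_iff, QuotientGroup.mk_pow, pow_mul, ← hq,
      Monoid.pow_exponent_eq_one, one_pow]

end CenterPow


/-- Let `G` be a finite `p`-group of class two, `p` odd, with
`exp(G/Z(G)) = p^r`. Then `T(G) = N_{Perm G}(Hol(G)) / Hol(G)` contains a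
cyclic subgroup of order `φ(p^r) = (p-1)·p^(r-1)`, i.e. an element of that
order; in particular it contains an element of order `p - 1`. -/
theorem stmt_11 (p r : ℕ) (hp : p.Prime) (hodd : Odd p)
    (G : Type*) [Group G] [Finite G] (hpG : IsPGroup p G)
    (h2 : commutator G ≤ Subgroup.center G) (hnab : commutator G ≠ ⊥)
    (hr : Monoid.exponent (G ⧸ Subgroup.center G) = p ^ r) :
    (∃ t : Subgroup.normalizer (holSubgroup G : Set (Equiv.Perm G)) ⧸
        (holSubgroup G).subgroupOf (Subgroup.normalizer (holSubgroup G : Set (Equiv.Perm G))),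
      orderOf t = (p - 1) * p ^ (r - 1)) ∧
    (∃ s : Subgroup.normalizer (holSubgroup G : Set (Equiv.Perm G)) ⧸
        (holSubgroup G).subgroupOf (Subgroup.normalizer (holSubgroup G : Set (Equiv.Perm G))),
      orderOf s = p - 1) := by
  classical
  have hp3 : 3 ≤ p := by
    obtain ⟨k, hk⟩ := hodd
    have := hp.two_le
    omega
  -- r ≥ 1
  have hr1 : 1 ≤ r := by
    by_contra hcon
    have hr0 : r = 0 := by omega
    rw [hr0, pow_zero] at hr
    have hsub : ∀ g : G, g ∈ Subgroup.center G := by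
      intro g
      have h1 : ((g : G ⧸ Subgroup.center G)) ^ Monoid.exponent (G ⧸ Subgroup.center G) = 1 :=
        Monoid.pow_exponent_eq_one _
      rw [hr, pow_one] at h1
      exact (QuotientGroup.eq_one_iff g).mp h1
    apply hnab
    rw [eq_bot_iff, commutator_def, Subgroup.commutator_le]
    intro g _ h _
    rw [Subgroup.mem_bot, commutatorElement_eq_one_iff_commute]
    exact (Subgroup.mem_center_iff.mp (hsub g) h).symm
  -- card of G
  haveI : Fact p.Prime := ⟨hp⟩
  obtain ⟨nn, hcard⟩ := IsPGroup.exists_card_eq hpG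
  have hcardodd : Odd (Nat.card G) := by rw [hcard]; exact hodd.pow
  have hcardpos : 0 < Nat.card G := Nat.card_pos
  -- the unit of full order
  obtain ⟨u, hu⟩ := exists_unit_order hp hp3 hr1
  haveI : NeZero (p ^ r) := ⟨pow_ne_zero r hp.pos.ne'⟩
  -- choose odd representative d
  set d₀ : ℕ := (u : ZMod (p ^ r)).val with hd₀def
  set d : ℕ := if Odd d₀ then d₀ else d₀ + p ^ r with hddef
  have hqodd : Odd (p ^ r) := hodd.pow
  have hdodd : Odd d := by
    rw [hddef]
    split_ifs with h
    · exact h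
    · rw [Nat.odd_add]
      exact iff_of_false h (fun hEven => (Nat.not_odd_iff_even.mpr hEven) hqodd)
  have hdco : Nat.Coprime d (p ^ r) := by
    have h0 : Nat.Coprime d₀ (p ^ r) := ZMod.val_coe_unit_coprime u
    rw [hddef]
    split_ifs with h
    · exact h0
    · simpa using (Nat.coprime_add_self_right).mpr h0
  have hdcast : ((d : ℕ) : ZMod (p ^ r)) = (u : ZMod (p ^ r)) := by
    rw [hddef]
    split_ifs with h
    · exact ZMod.natCast_rightInverse _
    · rw [Nat.cast_add, ZMod.natCast_self, add_zero]
      exact ZMod.natCast_rightInverse _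
  -- d coprime to card G
  have hdp : Nat.Coprime d p := ((Nat.coprime_pow_right_iff (show 0 < r by omega)) d p).mp hdco
  have hdc : Nat.Coprime d (Nat.card G) := by rw [hcard]; exact hdp.pow_right nn
  -- construct inverse exponent e
  have htotpos : 0 < (Nat.card G).totient := Nat.totient_pos.mpr hcardpos
  set e₀ : ℕ := d ^ ((Nat.card G).totient - 1) with he₀def
  have hde₀ : d * e₀ ≡ 1 [MOD Nat.card G] := by
    have : d * e₀ = d ^ (Nat.card G).totient := by
      rw [he₀def, ← pow_succ']
      congr 1
      omega
    rw [this]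
    exact Nat.ModEq.pow_totient hdc
  set e : ℕ := if Odd e₀ then e₀ else e₀ + Nat.card G with hedef
  have heodd : Odd e := by
    rw [hedef]
    split_ifs with h
    · exact h
    · rw [Nat.odd_add]
      exact iff_of_false h (fun hEven => (Nat.not_odd_iff_even.mpr hEven) hcardodd)
  have hde : d * e ≡ 1 [MOD Nat.card G] := by
    rw [hedef]
    split_ifs with h
    · exact hde₀
    · calc d * (e₀ + Nat.card G) = d * e₀ + d * Nat.card G := by ring
      _ ≡ d * e₀ + 0 [MOD Nat.card G] :=
          Nat.ModEq.add_left _ (Nat.modEq_zero_iff_dvd.mpr (dvd_mul_left _ _))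
      _ = d * e₀ := by ring
      _ ≡ 1 [MOD Nat.card G] := hde₀
  have hpowmod : ∀ (x : G) (k : ℕ), k ≡ 1 [MOD Nat.card G] → x ^ k = x := by
    intro x k hk
    have h1 : k ≡ 1 [MOD orderOf x] := hk.of_dvd (orderOf_dvd_natCard x)
    calc x ^ k = x ^ 1 := pow_eq_pow_iff_modEq.mpr h1
    _ = x := pow_one x
  have hde1 : ∀ x : G, (x ^ d) ^ e = x := fun x => by
    rw [← pow_mul]; exact hpowmod x _ hde
  have hed1 : ∀ x : G, (x ^ e) ^ d = x := fun x => by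
    rw [← pow_mul, mul_comm]; exact hpowmod x _ hde
  obtain ⟨m, hm⟩ : ∃ m, d = 2 * m + 1 := by
    obtain ⟨m, hm⟩ := hdodd; exact ⟨m, by omega⟩
  obtain ⟨mm, hmm⟩ : ∃ mm, e = 2 * mm + 1 := by
    obtain ⟨mm, hmm⟩ := heodd; exact ⟨mm, by omega⟩
  have hde2 : ∀ x : G, (x ^ (2 * m + 1)) ^ (2 * mm + 1) = x := by
    intro x; rw [← hm, ← hmm]; exact hde1 x
  have hed2 : ∀ x : G, (x ^ (2 * mm + 1)) ^ (2 * m + 1) = x := by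
    intro x; rw [← hm, ← hmm]; exact hed1 x
  set θ : Equiv.Perm G :=
    ⟨fun x => x ^ (2 * m + 1), fun x => x ^ (2 * mm + 1), hde2, hed2⟩ with hθdef
  have hθapp : ∀ x : G, θ x = x ^ d := fun x => by
    rw [hθdef, hm]; rfl
  have hθN : θ ∈ Subgroup.normalizer (holSubgroup G : Set (Equiv.Perm G)) := theta_mem_normalizer h2 hde2 hed2
  set nelt : Subgroup.normalizer (holSubgroup G : Set (Equiv.Perm G)) := ⟨θ, hθN⟩ with hneltdef
  set t : Subgroup.normalizer (holSubgroup G : Set (Equiv.Perm G)) ⧸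
      (holSubgroup G).subgroupOf (Subgroup.normalizer (holSubgroup G : Set (Equiv.Perm G))) := QuotientGroup.mk nelt with htdef
  -- characterize powers of t being trivial
  have key : ∀ k : ℕ, t ^ k = 1 ↔ orderOf u ∣ k := by
    intro k
    have hθk : ∀ x : G, (θ ^ k) x = x ^ (d ^ k) := perm_pow_apply hθapp k
    have hdk1 : 1 ≤ d ^ k := Nat.one_le_pow _ _ (by omega)
    obtain ⟨M, hM⟩ : ∃ M, d ^ k = 2 * M + 1 := by
      obtain ⟨M, hM⟩ := hdodd.pow (n := k); exact ⟨M, by omega⟩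
    have hθkM : ∀ x : G, (θ ^ k) x = x ^ (2 * M + 1) := fun x => by rw [hθk, hM]
    calc t ^ k = 1 ↔ nelt ^ k ∈ (holSubgroup G).subgroupOf (Subgroup.normalizer (holSubgroup G : Set (Equiv.Perm G))) := by
          rw [htdef, ← QuotientGroup.mk_pow, QuotientGroup.eq_one_iff]
    _ ↔ θ ^ k ∈ holSubgroup G := by
          rw [Subgroup.mem_subgroupOf, hneltdef]
          norm_cast
    _ ↔ ∀ g : G, g ^ M ∈ Subgroup.center G := hol_mem_iff_center h2 hθkM
    _ ↔ p ^ r ∣ M := center_pow_iff hr M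
    _ ↔ p ^ r ∣ 2 * M := by
          constructor
          · intro h; exact Dvd.dvd.mul_left h 2
          · intro h
            have hq2 : Nat.Coprime (p ^ r) 2 := by
              exact Nat.coprime_two_right.mpr hqodd
            have h' : p ^ r ∣ M * 2 := by rwa [mul_comm] at h
            exact Nat.Coprime.dvd_of_dvd_mul_right hq2 h'
    _ ↔ p ^ r ∣ d ^ k - 1 := by rw [show d ^ k - 1 = 2 * M by omega]
    _ ↔ d ^ k ≡ 1 [MOD p ^ r] := by
          constructor
          · intro h
            exact ((Nat.modEq_iff_dvd' hdk1).mpr h).symm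
          · intro h
            exact (Nat.modEq_iff_dvd' hdk1).mp h.symm
    _ ↔ u ^ k = 1 := by
          rw [Units.ext_iff, Units.val_pow_eq_pow_val, Units.val_one, ← hdcast,
            ← Nat.cast_pow,
            show (1 : ZMod (p ^ r)) = ((1 : ℕ) : ZMod (p ^ r)) from by norm_cast,
            ZMod.natCast_eq_natCast_iff]
    _ ↔ orderOf u ∣ k := orderOf_dvd_iff_pow_eq_one.symm
  have hordt : orderOf t = orderOf u := by
    apply Nat.dvd_antisymm
    · exact orderOf_dvd_of_pow_eq_one ((key _).mpr dvd_rfl)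
    · exact (key _).mp (pow_orderOf_eq_one t)
  have hordt' : orderOf t = (p - 1) * p ^ (r - 1) := by rw [hordt, hu]
  refine ⟨⟨t, hordt'⟩, ⟨t ^ (p ^ (r - 1)), ?_⟩⟩
  rw [orderOf_pow' t (pow_ne_zero _ hp.pos.ne'), hordt']
  rw [Nat.gcd_eq_right (dvd_mul_left _ _)]
  exact Nat.mul_div_cancel _ (pow_pos hp.pos _)
end NT
end

section
/- Let p be an odd prime and G_p = ⟨x, y : x^{p²} = y^{p²} = 1, [x,y] = x^p⟩. Then the map α : g ↦ g^{1+p} is an automorphism of G_p lying in the center of Aut(G_p). -/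
/-- The relators of the presentation
`⟨x, y : x^(p²) = y^(p²) = 1, [x,y] = x^p⟩`, where `[x,y] = x⁻¹y⁻¹xy`. -/
def gpRels (p : ℕ) : Set (FreeGroup (Fin 2)) :=
  { FreeGroup.of 0 ^ p ^ 2, FreeGroup.of 1 ^ p ^ 2,
    (FreeGroup.of 0)⁻¹ * (FreeGroup.of 1)⁻¹ * FreeGroup.of 0 * FreeGroup.of 1
      * (FreeGroup.of 0 ^ p)⁻¹ }

/-- The group `G_p = ⟨x, y : x^(p²) = y^(p²) = 1, [x,y] = x^p⟩`. -/
abbrev GpGroup (p : ℕ) := PresentedGroup (gpRels p)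

/-- The generator `x` of `G_p`. -/
def gpX (p : ℕ) : GpGroup p := PresentedGroup.of 0

/-- The generator `y` of `G_p`. -/
def gpY (p : ℕ) : GpGroup p := PresentedGroup.of 1

@[ext]
structure Model (p : ℕ) where
  a : ZMod (p^2)
  b : ZMod (p^2)

namespace Model
variable {p : ℕ}

lemma ppz : ((p : ZMod (p^2)) * p = 0) := by
  have : ((p * p : ℕ) : ZMod (p^2)) = 0 := by
    rw [← pow_two]; exact ZMod.natCast_self _
  push_cast at this; exact this

def mul' (g h : Model p) : Model p := ⟨g.a + h.a - p * g.b * h.a, g.b + h.b⟩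
def inv' (g : Model p) : Model p := ⟨-g.a - p * g.a * g.b, -g.b⟩

lemma mul'_assoc (g h k : Model p) : mul' (mul' g h) k = mul' g (mul' h k) := by
  ext <;> dsimp [mul']
  · linear_combination (-(g.b * h.b * k.a)) * (ppz (p := p))
  · ring

lemma one_mul' (g : Model p) : mul' ⟨0,0⟩ g = g := by ext <;> dsimp [mul'] <;> ring
lemma mul_one' (g : Model p) : mul' g ⟨0,0⟩ = g := by ext <;> dsimp [mul'] <;> ring
lemma inv_mul' (g : Model p) : mul' (inv' g) g = ⟨0,0⟩ := by
  ext <;> dsimp [mul', inv'] <;> ring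

instance : Group (Model p) where
  mul := mul'
  one := ⟨0, 0⟩
  inv := inv'
  mul_assoc := mul'_assoc
  one_mul := one_mul'
  mul_one := mul_one'
  inv_mul_cancel := inv_mul'

@[simp] lemma mul_a (g h : Model p) : (g * h).a = g.a + h.a - p * g.b * h.a := rfl
@[simp] lemma mul_b (g h : Model p) : (g * h).b = g.b + h.b := rfl
@[simp] lemma one_a : (1 : Model p).a = 0 := rfl
@[simp] lemma one_b : (1 : Model p).b = 0 := rfl
@[simp] lemma inv_a (g : Model p) : (g⁻¹).a = -g.a - p * g.a * g.b := rfl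
@[simp] lemma inv_b (g : Model p) : (g⁻¹).b = -g.b := rfl

lemma pow_def (g : Model p) (n : ℕ) :
    g ^ n = ⟨n * g.a - ((n.choose 2 * p : ℕ)) * g.a * g.b, n * g.b⟩ := by
  induction n with
  | zero => ext <;> simp
  | succ n ih =>
      rw [pow_succ, ih]
      have hc : (n + 1).choose 2 = n.choose 2 + n := by
        rw [Nat.choose_succ_succ]; simp [Nat.choose_one_right, Nat.add_comm]
      ext <;> simp [hc] <;> push_cast <;> ring

/-- The `(1+p)`-power automorphism of the model. -/
def mu (p : ℕ) : MulAut (Model p) where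
  toFun g := ⟨(1 + p) * g.a, (1 + p) * g.b⟩
  invFun g := ⟨(1 - p) * g.a, (1 - p) * g.b⟩
  left_inv g := by
    ext <;> dsimp
    · linear_combination (-(g.a)) * (ppz (p := p))
    · linear_combination (-(g.b)) * (ppz (p := p))
  right_inv g := by
    ext <;> dsimp
    · linear_combination (-(g.a)) * (ppz (p := p))
    · linear_combination (-(g.b)) * (ppz (p := p))
  map_mul' g h := by
    ext <;> dsimp
    · linear_combination ((1 + (p : ZMod (p^2))) * g.b * h.a) * (ppz (p := p))
    · ring

@[simp] lemma mu_a (m : Model p) : (mu p m).a = (1 + p) * m.a := rfl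
@[simp] lemma mu_b (m : Model p) : (mu p m).b = (1 + p) * m.b := rfl

lemma mu_pow (hodd : Odd p) (m : Model p) : m ^ (1 + p) = mu p m := by
  obtain ⟨k, hk⟩ := hodd
  have h1 : (1 + p).choose 2 = (k + 1) * p := by
    have h2 : (1 + p) * (1 + p - 1) = ((k + 1) * p) * 2 := by
      have h0 : 1 + p - 1 = p := by omega
      rw [h0, hk]; ring
    rw [Nat.choose_two_right, h2, Nat.mul_div_cancel _ (by norm_num)]
  have h3 : (((1 + p).choose 2 * p : ℕ) : ZMod (p^2)) = 0 := by
    rw [h1, (ZMod.natCast_eq_zero_iff _ _)]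
    exact ⟨k + 1, by ring⟩
  rw [pow_def]
  ext <;> simp [h3] <;> push_cast <;> ring

end Model

namespace GpAux
variable {p : ℕ}

lemma rel_eq_one {r : FreeGroup (Fin 2)} (h : r ∈ gpRels p) :
    PresentedGroup.mk (gpRels p) r = 1 :=
  (QuotientGroup.eq_one_iff r).mpr (Subgroup.subset_normalClosure h)

lemma relX : gpX p ^ (p^2) = 1 := by
  have h : FreeGroup.of 0 ^ p ^ 2 ∈ gpRels p := Set.mem_insert _ _
  have := rel_eq_one h
  rwa [map_pow] at this

lemma relY : gpY p ^ (p^2) = 1 := by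
  have h : FreeGroup.of 1 ^ p ^ 2 ∈ gpRels p :=
    Set.mem_insert_of_mem _ (Set.mem_insert _ _)
  have := rel_eq_one h
  rwa [map_pow] at this

lemma relXY : (gpY p)⁻¹ * gpX p * gpY p = gpX p ^ (1 + p) := by
  have h : (FreeGroup.of 0)⁻¹ * (FreeGroup.of 1)⁻¹ * FreeGroup.of 0 * FreeGroup.of 1
      * (FreeGroup.of 0 ^ p)⁻¹ ∈ gpRels p :=
    Set.mem_insert_of_mem _ (Set.mem_insert_of_mem _ rfl)
  have h1 := rel_eq_one h
  simp only [map_mul, map_inv, map_pow] at h1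
  have h2 : (gpX p)⁻¹ * (gpY p)⁻¹ * gpX p * gpY p * (gpX p ^ p)⁻¹ = 1 := h1
  calc (gpY p)⁻¹ * gpX p * gpY p
      = gpX p * ((gpX p)⁻¹ * (gpY p)⁻¹ * gpX p * gpY p * (gpX p ^ p)⁻¹) * gpX p ^ p := by
        group
    _ = gpX p ^ (1 + p) := by rw [h2, pow_add, pow_one]; group

lemma conjpow {G : Type*} [Group G] (a b : G) (n : ℕ) :
    (a * b * a⁻¹)^n = a * b^n * a⁻¹ := by
  induction n with
  | zero => simp
  | succ n ih => rw [pow_succ, pow_succ, ih]; group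

lemma pow_mod {G : Type*} [Group G] (t : G) {n : ℕ} (ht : t ^ n = 1) (m : ℕ) :
    t ^ m = t ^ (m % n) := by
  conv_lhs => rw [← Nat.div_add_mod m n]
  rw [pow_add, pow_mul, ht, one_pow, one_mul]

/-- `x^a` for `a : ZMod (p^2)`. -/
def X (p : ℕ) (a : ZMod (p^2)) : GpGroup p := gpX p ^ a.val
/-- `y^b` for `b : ZMod (p^2)`. -/
def Y (p : ℕ) (b : ZMod (p^2)) : GpGroup p := gpY p ^ b.val

section
variable (hp : p.Prime)
include hp

lemma neZero : NeZero (p^2) := ⟨pow_ne_zero 2 hp.ne_zero⟩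

lemma val_cast (a : ZMod (p^2)) : ((a.val : ℕ) : ZMod (p^2)) = a := by
  haveI := neZero hp
  rw [ZMod.natCast_val, ZMod.cast_id]

lemma Xnat (n : ℕ) : gpX p ^ n = X p (n : ZMod (p^2)) := by
  haveI := neZero hp
  rw [X, ZMod.val_natCast, ← pow_mod _ relX]

lemma Ynat (n : ℕ) : gpY p ^ n = Y p (n : ZMod (p^2)) := by
  haveI := neZero hp
  rw [Y, ZMod.val_natCast, ← pow_mod _ relY]

lemma Xadd (a c : ZMod (p^2)) : X p a * X p c = X p (a + c) := by
  rw [X, X, ← pow_add, Xnat hp]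
  push_cast [val_cast hp]
  rfl

lemma Yadd (a c : ZMod (p^2)) : Y p a * Y p c = Y p (a + c) := by
  rw [Y, Y, ← pow_add, Ynat hp]
  push_cast [val_cast hp]
  rfl

lemma conjX (a : ZMod (p^2)) : (gpY p)⁻¹ * X p a * gpY p = X p ((1 + p) * a) := by
  have h := conjpow ((gpY p)⁻¹) (gpX p) a.val
  rw [inv_inv] at h
  rw [X, ← h, relXY, ← pow_mul, Xnat hp]
  push_cast [val_cast hp]
  rfl

lemma conjX' (a : ZMod (p^2)) : gpY p * X p a * (gpY p)⁻¹ = X p ((1 - p) * a) := by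
  have h := conjX hp ((1 - p) * a)
  have harg : (1 + (p : ZMod (p^2))) * ((1 - p) * a) = a := by
    linear_combination (-(a)) * (Model.ppz (p := p))
  rw [harg] at h
  rw [← h]; group

lemma conjXn (n : ℕ) (a : ZMod (p^2)) :
    gpY p ^ n * X p a * (gpY p ^ n)⁻¹ = X p ((1 - p)^n * a) := by
  induction n generalizing a with
  | zero => simp
  | succ n ih =>
      have harg : ((1 : ZMod (p^2)) - p)^(n+1) * a = (1 - p)^n * ((1 - p) * a) := by ring
      calc gpY p ^ (n+1) * X p a * (gpY p ^ (n+1))⁻¹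
          = gpY p ^ n * (gpY p * X p a * (gpY p)⁻¹) * (gpY p ^ n)⁻¹ := by
            rw [pow_succ]; group
        _ = gpY p ^ n * X p ((1 - p) * a) * (gpY p ^ n)⁻¹ := by rw [conjX' hp]
        _ = X p ((1 - p)^n * ((1 - p) * a)) := ih _
        _ = X p ((1 - p)^(n+1) * a) := by rw [harg]

lemma onemp (n : ℕ) : ((1 : ZMod (p^2)) - p)^n = 1 - n * p := by
  induction n with
  | zero => simp
  | succ n ih =>
      have hs : ((1 : ZMod (p^2)) - p)^(n+1) = (1 - p)^n * (1 - p) := pow_succ _ _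
      rw [hs, ih]
      push_cast
      linear_combination ((n : ZMod (p^2))) * (Model.ppz (p := p))

lemma YX (b c : ZMod (p^2)) : Y p b * X p c = X p ((1 - p * b) * c) * Y p b := by
  have h := conjXn hp b.val c
  rw [onemp hp, val_cast hp] at h
  rw [Y]
  have harg : (1 - (p : ZMod (p^2)) * b) * c = (1 - b * p) * c := by ring
  rw [harg, ← h]
  group

end
end GpAux

namespace GpAux
variable {p : ℕ}

/-- Images of the generators in the model. -/
def fgen (p : ℕ) : Fin 2 → Model p := ![⟨1, 0⟩, ⟨0, 1⟩]

lemma hrels : ∀ r ∈ gpRels p, FreeGroup.lift (fgen p) r = 1 := by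
  intro r hr
  simp only [gpRels, Set.mem_insert_iff, Set.mem_singleton_iff] at hr
  rcases hr with rfl | rfl | rfl
  · rw [map_pow, FreeGroup.lift_apply_of]
    ext <;> simp [fgen, Model.pow_def, ZMod.natCast_self]
  · rw [map_pow, FreeGroup.lift_apply_of]
    ext <;> simp [fgen, Model.pow_def, ZMod.natCast_self]
  · simp only [map_mul, map_inv, map_pow, FreeGroup.lift_apply_of]
    ext <;> simp [fgen, Model.pow_def] <;> ring

/-- The homomorphism from `G_p` to the model. -/
def phi (p : ℕ) : GpGroup p →* Model p := PresentedGroup.toGroup hrels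

lemma phi_x : phi p (gpX p) = (⟨1, 0⟩ : Model p) := by
  show phi p (PresentedGroup.of 0) = _
  rw [phi, PresentedGroup.toGroup.of]; rfl

lemma phi_y : phi p (gpY p) = (⟨0, 1⟩ : Model p) := by
  show phi p (PresentedGroup.of 1) = _
  rw [phi, PresentedGroup.toGroup.of]; rfl

/-- The homomorphism from the model to `G_p`. -/
def psi (hp : p.Prime) : Model p →* GpGroup p :=
  MonoidHom.mk' (fun m => X p m.a * Y p m.b) (by
    intro g h
    have h1 : Y p g.b * X p h.a = X p ((1 - p * g.b) * h.a) * Y p g.b := YX hp _ _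
    have harg : (g * h).a = g.a + (1 - p * g.b) * h.a := by simp; ring
    calc X p ((g * h).a) * Y p ((g * h).b)
        = X p (g.a + (1 - p * g.b) * h.a) * Y p (g.b + h.b) := by rw [harg]; rfl
      _ = (X p g.a * X p ((1 - p * g.b) * h.a)) * (Y p g.b * Y p h.b) := by
          rw [Xadd hp, Yadd hp]
      _ = X p g.a * (Y p g.b * X p h.a) * Y p h.b := by rw [h1]; group
      _ = (X p g.a * Y p g.b) * (X p h.a * Y p h.b) := by group)

lemma psi_apply (hp : p.Prime) (m : Model p) : psi hp m = X p m.a * Y p m.b := rfl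

lemma left_inv (hp : p.Prime) (g : GpGroup p) : psi hp (phi p g) = g := by
  haveI := neZero hp
  haveI : Fact (1 < p^2) := ⟨by have := hp.two_le; nlinarith⟩
  have hcomp : (psi hp).comp (phi p) = MonoidHom.id _ := by
    apply PresentedGroup.ext
    intro i
    fin_cases i
    · show psi hp (phi p (gpX p)) = gpX p
      rw [phi_x, psi_apply]
      simp [X, Y, ZMod.val_one, ZMod.val_zero]
    · show psi hp (phi p (gpY p)) = gpY p
      rw [phi_y, psi_apply]
      simp [X, Y, ZMod.val_one, ZMod.val_zero]
  exact DFunLike.congr_fun hcomp g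

lemma right_inv (hp : p.Prime) (m : Model p) : phi p (psi hp m) = m := by
  rw [psi_apply, map_mul, X, Y, map_pow, map_pow, phi_x, phi_y]
  ext <;> simp [Model.pow_def, val_cast hp]

/-- The isomorphism between `G_p` and the model. -/
def iso (hp : p.Prime) : GpGroup p ≃* Model p where
  toFun := phi p
  invFun := psi hp
  left_inv := left_inv hp
  right_inv := right_inv hp
  map_mul' := map_mul (phi p)

end GpAux

/-- For an odd prime `p` and `G_p = ⟨x, y : x^(p²) = y^(p²) = 1,
[x,y] = x^p⟩`, the map `g ↦ g^(1+p)` is an automorphism of `G_p` lying in the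
center of `Aut(G_p)`. -/
theorem stmt_13 (p : ℕ) (hp : p.Prime) (hodd : Odd p) :
    ∃ α : MulAut (GpGroup p),
      (∀ g : GpGroup p, α g = g ^ (1 + p)) ∧
      α ∈ Subgroup.center (MulAut (GpGroup p)) := by
  set e := GpAux.iso hp with he
  set α : MulAut (GpGroup p) := e.trans ((Model.mu p).trans e.symm) with hα'
  have hα : ∀ g : GpGroup p, α g = g ^ (1 + p) := by
    intro g
    show e.symm ((Model.mu p) (e g)) = _
    rw [← Model.mu_pow hodd, ← map_pow, e.symm_apply_apply]
  refine ⟨α, hα, ?_⟩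
  rw [Subgroup.mem_center_iff]
  intro β
  ext g
  rw [MulAut.mul_apply, MulAut.mul_apply, hα, hα, map_pow]
end

section
/- Let p be an odd prime and G_p = ⟨x, y : x^{p²} = y^{p²} = 1, [x,y] = x^p⟩, with γ_{s,t} as above and ν(h) = γ_{s,t}(h)∘ρ(h) in Perm(G_p). Then [ν(x), ν(y^d)] = ν(x^{pd(1 + t − s)}) for any integer d. Consequently, if t − s + 1 ≡ 0 (mod p), the regular subgroup N = ν(G_p) is abelian, hence not isomorphic to G_p. -/
private lemma fixpow {G : Type*} [Group G] (e : MulAut G) (x : G) (h : e x = x) :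
    ∀ n : ℤ, (e ^ n) x = x := by
  have h' : e⁻¹ x = x := by
    conv_lhs => rw [← h]
    exact e.symm_apply_apply x
  intro n
  induction n using Int.induction_on with
  | zero => rfl
  | succ k ih => rw [zpow_add_one, MulAut.mul_apply, h, ih]
  | pred k ih => rw [zpow_sub_one, MulAut.mul_apply, h', ih]

private lemma movepow {G : Type*} [Group G] (e : MulAut G) (x w : G)
    (hx : e x = x * w) (hw : e w = w) : ∀ n : ℤ, (e ^ n) x = x * w ^ n := by
  have hw' : e⁻¹ w = w := by
    conv_lhs => rw [← hw]
    exact e.symm_apply_apply w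
  have hx' : e⁻¹ x = x * w⁻¹ := by
    have h2 : e⁻¹ (x * w) = x := by rw [← hx]; exact e.symm_apply_apply x
    rw [map_mul, hw'] at h2
    exact eq_mul_inv_of_mul_eq h2
  intro n
  induction n using Int.induction_on with
  | zero => simp
  | succ k ih =>
      rw [zpow_add_one, MulAut.mul_apply, hx, map_mul, ih, fixpow e w hw,
        mul_assoc, ← zpow_add_one]
  | pred k ih =>
      rw [zpow_sub_one, MulAut.mul_apply, hx', map_mul, ih, map_inv,
        fixpow e w hw, mul_assoc, ← zpow_sub_one]

private lemma gp_xy_ne (p : ℕ) (hp : p.Prime) : gpX p * gpY p ≠ gpY p * gpX p := by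
  classical
  haveI : NeZero (p ^ 2) := ⟨pow_ne_zero 2 hp.ne_zero⟩
  have hpM : ((p : ZMod (p ^ 2))) * (p : ZMod (p ^ 2)) = 0 := by
    have h : ((p ^ 2 : ℕ) : ZMod (p ^ 2)) = 0 := ZMod.natCast_self (p ^ 2)
    push_cast at h
    linear_combination h
  obtain ⟨u, hval, hvalinv⟩ : ∃ v : (ZMod (p ^ 2))ˣ,
      ((v : ZMod (p ^ 2)) = 1 - (p : ZMod (p ^ 2))) ∧
      (((v⁻¹ : (ZMod (p ^ 2))ˣ) : ZMod (p ^ 2)) = 1 + (p : ZMod (p ^ 2))) :=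
    ⟨⟨1 - (p : ZMod (p ^ 2)), 1 + (p : ZMod (p ^ 2)),
      by linear_combination -hpM, by linear_combination -hpM⟩, rfl, rfl⟩
  set M := ZMod (p ^ 2) with hM
  set xE : Equiv.Perm (M × M) := Equiv.prodCongr (Equiv.addRight (1 : M)) (Equiv.refl M)
    with hxE
  set yE : Equiv.Perm (M × M) := Equiv.prodCongr (MulAction.toPerm u) (Equiv.addRight (1 : M))
    with hyE
  have hxap : ∀ ab : M × M, xE ab = (ab.1 + 1, ab.2) := fun _ => rfl
  have hyap : ∀ ab : M × M, yE ab = ((u : M) * ab.1, ab.2 + 1) := fun _ => rfl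
  have hxpow : ∀ (k : ℕ) (ab : M × M), (xE ^ k) ab = (ab.1 + (k : M), ab.2) := by
    intro k
    induction k with
    | zero => intro ab; simp
    | succ k ih =>
        intro ab
        rw [pow_succ, Equiv.Perm.mul_apply, hxap, ih]
        push_cast
        exact Prod.ext (by ring) rfl
  have hypow : ∀ (k : ℕ) (ab : M × M),
      (yE ^ k) ab = (((u ^ k : Mˣ) : M) * ab.1, ab.2 + (k : M)) := by
    intro k
    induction k with
    | zero => intro ab; simp
    | succ k ih =>
        intro ab
        rw [pow_succ, Equiv.Perm.mul_apply, hyap, ih]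
        push_cast
        refine Prod.ext ?_ (by ring)
        show ((u ^ k : Mˣ) : M) * ((u : M) * ab.1) = ((u ^ (k + 1) : Mˣ) : M) * ab.1
        rw [Units.val_pow_eq_pow_val, Units.val_pow_eq_pow_val]
        ring
  have hx2 : xE ^ (p ^ 2) = 1 := by
    apply Equiv.ext
    intro ab
    rw [hxpow]
    simp [ZMod.natCast_self]
  have key : ((p : ℤ)) ^ 2 ∣ (1 + (p : ℤ)) ^ p - 1 := by
    have h := dvd_sub_pow_of_dvd_sub (R := ℤ) (p := p) (a := 1 + p) (b := 1)
      (by simp) 1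
    simpa using h
  have key2 : ((1 : ZMod (p ^ 2)) + p) ^ p = 1 := by
    have h0 : (((1 + (p : ℤ)) ^ p - 1 : ℤ) : ZMod (p ^ 2)) = 0 := by
      rw [ZMod.intCast_zmod_eq_zero_iff_dvd]
      push_cast
      exact key
    push_cast at h0
    exact sub_eq_zero.mp h0
  have huinvp : (u⁻¹) ^ p = 1 := by
    apply Units.ext
    rw [Units.val_pow_eq_pow_val, hvalinv]
    exact key2
  have hup : u ^ p = 1 := by
    have := congrArg (·⁻¹) huinvp
    simpa using this
  have hup2 : u ^ (p ^ 2) = 1 := by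
    have h5 : u ^ (p ^ 2) = (u ^ p) ^ p := by
      rw [← pow_mul]
      congr 1
      ring
    rw [h5, hup, one_pow]
  have hy2 : yE ^ (p ^ 2) = 1 := by
    apply Equiv.ext
    intro ab
    rw [hypow, hup2]
    simp [ZMod.natCast_self]
  have h3 : xE * yE = yE * xE ^ (p + 1) := by
    apply Equiv.ext
    intro ab
    rw [Equiv.Perm.mul_apply, Equiv.Perm.mul_apply, hyap, hxap, hxpow, hyap]
    refine Prod.ext ?_ rfl
    show (u : M) * ab.1 + 1 = (u : M) * (ab.1 + ((p + 1 : ℕ) : M))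
    rw [hval]
    push_cast
    linear_combination hpM
  have f : Fin 2 → Equiv.Perm (M × M) := ![xE, yE]
  have hrel : ∀ r ∈ gpRels p, FreeGroup.lift ![xE, yE] r = 1 := by
    intro r hr
    simp only [gpRels, Set.mem_insert_iff, Set.mem_singleton_iff] at hr
    rcases hr with rfl | rfl | rfl
    · rw [map_pow, FreeGroup.lift_apply_of]
      simpa using hx2
    · rw [map_pow, FreeGroup.lift_apply_of]
      simpa using hy2
    · simp only [map_mul, map_inv, map_pow, FreeGroup.lift_apply_of, Matrix.cons_val_zero,
        Matrix.cons_val_one, Matrix.head_cons]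
      calc xE⁻¹ * yE⁻¹ * xE * yE * (xE ^ p)⁻¹
          = xE⁻¹ * (yE⁻¹ * (xE * yE)) * (xE ^ p)⁻¹ := by group
        _ = xE⁻¹ * (yE⁻¹ * (yE * (xE * xE ^ p))) * (xE ^ p)⁻¹ := by rw [h3, pow_succ']
        _ = 1 := by group
  have hne : xE * yE ≠ yE * xE := by
    intro h
    have h0 := Equiv.ext_iff.mp h ((0 : M), (0 : M))
    rw [Equiv.Perm.mul_apply, Equiv.Perm.mul_apply, hyap, hxap, hxap, hyap] at h0
    have h1 : (1 : M) = (u : M) := by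
      have := congrArg Prod.fst h0
      simpa using this
    rw [hval] at h1
    have h2 : ((p : ℕ) : ZMod (p ^ 2)) = 0 := by linear_combination h1
    rw [ZMod.natCast_eq_zero_iff] at h2
    have h3 := Nat.le_of_dvd hp.pos h2
    have h4 := hp.two_le
    nlinarith
  intro hcontra
  apply hne
  have := congrArg (PresentedGroup.toGroup hrel) hcontra
  simpa [gpX, gpY, map_mul, PresentedGroup.toGroup.of] using this

set_option maxHeartbeats 1000000 in
/-- For an odd prime `p`, `G_p = ⟨x, y : x^(p²) = y^(p²) = 1, [x,y] = x^p⟩`,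
and `γ = γ_{s,t}` as in the paper, with `ν(h) : x ↦ γ(h)(x) * h`, one has
(in the paper's commutator convention `[a,b] = a⁻¹b⁻¹ab` with left-to-right
composition, rendered here in Mathlib's convention)
`[ν(x), ν(y^d)] = ν(x^(pd(1+t-s)))` for every integer `d`. Consequently, if
`p ∣ t - s + 1`, the regular subgroup `N = ν(G_p)` is abelian, hence not
isomorphic to `G_p`. -/
theorem stmt_15 (p : ℕ) (hp : p.Prime) (hodd : Odd p) (s t : ℤ)
    (γ : GpGroup p → MulAut (GpGroup p))
    (hx1 : (γ (gpX p)) (gpX p) = gpX p)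
    (hx2 : (γ (gpX p)) (gpY p) = gpX p ^ ((p : ℤ) * s) * gpY p)
    (hy1 : (γ (gpY p)) (gpX p) = gpX p ^ (1 + (p : ℤ) * t))
    (hy2 : (γ (gpY p)) (gpY p) = gpY p ^ (1 + (p : ℤ) * (s + t)))
    (hz : ∀ z ∈ Subgroup.center (GpGroup p), γ z = 1)
    (hγ : ∀ g h : GpGroup p, γ (g * h) = γ g * γ h)
    (hβ : ∀ (β : MulAut (GpGroup p)) (g : GpGroup p), γ (β g) = β * γ g * β⁻¹)
    (ν : GpGroup p → Equiv.Perm (GpGroup p))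
    (hν : ∀ h : GpGroup p, ν h = (γ h).toEquiv.trans (Equiv.mulRight h)) :
    (∀ d : ℤ,
      ν (gpY p ^ d) * ν (gpX p) * (ν (gpY p ^ d))⁻¹ * (ν (gpX p))⁻¹
        = ν (gpX p ^ ((p : ℤ) * d * (1 + t - s)))) ∧
    ((p : ℤ) ∣ t - s + 1 →
      (∀ g h : GpGroup p, ν g * ν h = ν h * ν g) ∧
      ¬ Nonempty (↥(Subgroup.closure (Set.range ν)) ≃* GpGroup p)) := by
  classical
  set X := gpX p with hXdef
  set Y := gpY p with hYdef
  -- relations in the presented group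
  have hmk : ∀ r ∈ gpRels p, (PresentedGroup.mk (gpRels p) r : GpGroup p) = 1 := by
    intro r hr
    exact (QuotientGroup.eq_one_iff r).mpr (Subgroup.subset_normalClosure hr)
  have hX2 : X ^ (p ^ 2) = 1 := by
    have h := hmk _ (show (FreeGroup.of 0 ^ p ^ 2 : FreeGroup (Fin 2)) ∈ gpRels p by
      simp [gpRels])
    rw [map_pow] at h
    exact h
  have hY2 : Y ^ (p ^ 2) = 1 := by
    have h := hmk _ (show (FreeGroup.of 1 ^ p ^ 2 : FreeGroup (Fin 2)) ∈ gpRels p by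
      simp [gpRels])
    rw [map_pow] at h
    exact h
  have hA : X⁻¹ * Y⁻¹ * X * Y = X ^ p := by
    have h := hmk _ (show ((FreeGroup.of 0)⁻¹ * (FreeGroup.of 1)⁻¹ * FreeGroup.of 0
        * FreeGroup.of 1 * (FreeGroup.of 0 ^ p)⁻¹ : FreeGroup (Fin 2)) ∈ gpRels p by
      simp [gpRels])
    rw [map_mul, map_mul, map_mul, map_mul, map_inv, map_inv, map_inv, map_pow] at h
    exact mul_inv_eq_one.mp h
  have hXp2 : X ^ ((p : ℤ) * (p : ℤ)) = 1 := by
    have e : ((p : ℤ) * (p : ℤ)) = ((p ^ 2 : ℕ) : ℤ) := by push_cast; ring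
    rw [e, zpow_natCast, hX2]
  have hYp2 : Y ^ ((p : ℤ) * (p : ℤ)) = 1 := by
    have e : ((p : ℤ) * (p : ℤ)) = ((p ^ 2 : ℕ) : ℤ) := by push_cast; ring
    rw [e, zpow_natCast, hY2]
  set c := X ^ ((p : ℤ)) with hcdef
  set z := Y ^ ((p : ℤ)) with hzdef
  have hcp : c ^ ((p : ℤ)) = 1 := by rw [hcdef, ← zpow_mul]; exact hXp2
  have hzp : z ^ ((p : ℤ)) = 1 := by rw [hzdef, ← zpow_mul]; exact hYp2
  have hcpow : ∀ k : ℤ, X ^ ((p : ℤ) * k) = c ^ k := by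
    intro k; rw [hcdef, ← zpow_mul]
  have hzpow : ∀ k : ℤ, Y ^ ((p : ℤ) * k) = z ^ k := by
    intro k; rw [hzdef, ← zpow_mul]
  have hconj : Y⁻¹ * X * Y = X * c := by
    rw [hcdef, zpow_natCast]
    conv_rhs => rw [← hA]
    group
  have econj : ∀ (g a : GpGroup p), (MulAut.conj g) a = g * a * g⁻¹ := fun _ _ => rfl
  have heX : (MulAut.conj Y⁻¹) X = X * c := by
    rw [econj, inv_inv]
    exact hconj
  have hXcomc : Commute X c := by
    rw [hcdef]; exact (Commute.refl X).zpow_right _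
  have heC : (MulAut.conj Y⁻¹) c = c := by
    conv_lhs => rw [hcdef]
    rw [map_zpow, heX, hXcomc.mul_zpow, hcp, mul_one]
  have hcY : Y * c = c * Y := by
    have h := heC
    rw [econj, inv_inv] at h
    calc Y * c = Y * (Y⁻¹ * c * Y) := by rw [h]
      _ = c * Y := by group
  -- generating set
  have htop : Subgroup.closure ({X, Y} : Set (GpGroup p)) = ⊤ := by
    have hrange : Set.range (PresentedGroup.of : Fin 2 → GpGroup p) = {X, Y} := by
      ext g
      constructor
      · rintro ⟨i, rfl⟩
        fin_cases i
        · exact Set.mem_insert _ _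
        · exact Set.mem_insert_iff.mpr (Or.inr rfl)
      · rintro (rfl | rfl)
        exacts [⟨0, rfl⟩, ⟨1, rfl⟩]
    rw [← hrange, PresentedGroup.closure_range_of]
  have hcenter : ∀ w : GpGroup p, (w * X = X * w) → (w * Y = Y * w) →
      w ∈ Subgroup.center (GpGroup p) := by
    intro w h1 h2
    rw [Subgroup.mem_center_iff]
    intro g
    have hle : Subgroup.closure ({X, Y} : Set (GpGroup p)) ≤ Subgroup.centralizer {w} := by
      rw [Subgroup.closure_le]
      rintro v (rfl | rfl)
      · exact Subgroup.mem_centralizer_iff.mpr (by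
          rintro h hh
          rw [Set.mem_singleton_iff] at hh
          subst hh
          exact h1)
      · exact Subgroup.mem_centralizer_iff.mpr (by
          rintro h hh
          rw [Set.mem_singleton_iff] at hh
          subst hh
          exact h2)
    have hg : g ∈ Subgroup.centralizer {w} := by
      apply hle
      rw [htop]
      trivial
    exact (Subgroup.mem_centralizer_iff.mp hg w rfl).symm
  have hcC : c ∈ Subgroup.center (GpGroup p) :=
    hcenter c hXcomc.eq.symm hcY.symm
  have hcg : ∀ (g : GpGroup p) (k : ℤ), g * c ^ k = c ^ k * g := fun g k =>
    Subgroup.mem_center_iff.mp (Subgroup.zpow_mem _ hcC k) g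
  -- the commutation rule for powers
  have hMd' : ∀ b α : ℤ, (Y ^ b)⁻¹ * X ^ α * Y ^ b = X ^ α * c ^ (b * α) := by
    intro b α
    have h := movepow (MulAut.conj Y⁻¹) X c heX heC b
    rw [← map_zpow (MulAut.conj : GpGroup p →* MulAut (GpGroup p)) Y⁻¹ b] at h
    rw [econj, inv_zpow, inv_inv] at h
    have h2 : (MulAut.conj ((Y ^ b)⁻¹)) (X ^ α) = X ^ α * c ^ (b * α) := by
      have h3 : (MulAut.conj ((Y ^ b)⁻¹)) (X ^ α) = ((MulAut.conj ((Y ^ b)⁻¹)) X) ^ α :=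
        map_zpow _ _ _
      rw [h3]
      have h4 : (MulAut.conj ((Y ^ b)⁻¹)) X = X * c ^ b := by
        rw [econj, inv_inv]
        exact h
      rw [h4]
      have h5 : Commute X (c ^ b) := hcg X b
      rw [h5.mul_zpow, ← zpow_mul]
    rw [econj, inv_inv] at h2
    exact h2
  have hMd : ∀ b : ℤ, (Y ^ b)⁻¹ * X * Y ^ b = X * c ^ b := by
    intro b
    have h := hMd' b 1
    rw [zpow_one, mul_one] at h
    exact h
  have hzX : X * z = z * X := by
    have h := hMd (p : ℤ)
    rw [hcp, mul_one] at h
    have h2 : X * Y ^ ((p : ℤ)) = Y ^ ((p : ℤ)) * X := by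
      calc X * Y ^ ((p : ℤ)) = Y ^ ((p : ℤ)) * ((Y ^ ((p : ℤ)))⁻¹ * X * Y ^ ((p : ℤ))) := by
            group
        _ = Y ^ ((p : ℤ)) * X := by rw [h]
    rw [hzdef]
    exact h2
  have hzC : z ∈ Subgroup.center (GpGroup p) := by
    apply hcenter
    · exact hzX.symm
    · have : Commute Y z := by rw [hzdef]; exact (Commute.refl Y).zpow_right _
      exact this.symm.eq.symm.symm ▸ this.eq.symm ▸ this.symm.eq
  have hzg : ∀ (g : GpGroup p) (k : ℤ), g * z ^ k = z ^ k * g := fun g k =>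
    Subgroup.mem_center_iff.mp (Subgroup.zpow_mem _ hzC k) g
  have hswap : ∀ b α : ℤ, Y ^ b * X ^ α = X ^ α * c ^ (-(b * α)) * Y ^ b := by
    intro b α
    have h := hMd' (-b) α
    rw [zpow_neg, inv_inv] at h
    have e : (-b) * α = -(b * α) := by ring
    rw [e] at h
    calc Y ^ b * X ^ α = (Y ^ b * X ^ α * (Y ^ b)⁻¹) * Y ^ b := by group
      _ = X ^ α * c ^ (-(b * α)) * Y ^ b := by rw [h]
  -- γ is a homomorphism into automorphisms
  have hγpow : ∀ (g : GpGroup p) (n : ℤ), γ (g ^ n) = (γ g) ^ n := fun g n =>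
    map_zpow (MonoidHom.mk' γ hγ) g n
  have hγc : ∀ k : ℤ, γ (c ^ k) = 1 := fun k => hz _ (Subgroup.zpow_mem _ hcC k)
  have hγz : ∀ k : ℤ, γ (z ^ k) = 1 := fun k => hz _ (Subgroup.zpow_mem _ hzC k)
  -- generator action in central form
  have hy1' : γ Y X = X * c ^ t := by
    rw [hy1, zpow_add, zpow_one, hcpow]
  have hx2' : γ X Y = Y * c ^ s := by
    rw [hx2, hcpow]
    exact (hcg Y s).symm
  have hy2' : γ Y Y = Y * z ^ (s + t) := by
    rw [hy2, zpow_add, zpow_one, hzpow]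
  -- fixed points of the generators' automorphisms
  have hXc' : γ X c = c := by
    conv_lhs => rw [hcdef]
    rw [map_zpow, hx1]
  have hYc : γ Y c = c := by
    conv_lhs => rw [hcdef]
    rw [map_zpow, hy1']
    have h5 : Commute X (c ^ t) := hcg X t
    rw [h5.mul_zpow, ← zpow_mul, mul_comm t ((p : ℤ)), zpow_mul, hcp, one_zpow, mul_one]
  have hXz : γ X z = z := by
    conv_lhs => rw [hzdef]
    rw [map_zpow, hx2']
    have h5 : Commute Y (c ^ s) := hcg Y s
    rw [h5.mul_zpow, ← zpow_mul, mul_comm s ((p : ℤ)), zpow_mul, hcp, one_zpow, mul_one]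
  have hYz : γ Y z = z := by
    conv_lhs => rw [hzdef]
    rw [map_zpow, hy2']
    have h5 : Commute Y (z ^ (s + t)) := hzg Y (s + t)
    rw [h5.mul_zpow, ← zpow_mul, mul_comm (s + t) ((p : ℤ)), zpow_mul, hzp, one_zpow, mul_one]
  have hXck : ∀ k : ℤ, γ X (c ^ k) = c ^ k := fun k => by rw [map_zpow, hXc']
  have hYck : ∀ k : ℤ, γ Y (c ^ k) = c ^ k := fun k => by rw [map_zpow, hYc]
  have hXzk : ∀ k : ℤ, γ X (z ^ k) = z ^ k := fun k => by rw [map_zpow, hXz]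
  have hYzk : ∀ k : ℤ, γ Y (z ^ k) = z ^ k := fun k => by rw [map_zpow, hYz]
  -- powers of the automorphisms
  have P1 : ∀ d : ℤ, ((γ Y) ^ d) X = X * c ^ (t * d) := by
    intro d
    have h := movepow (γ Y) X (c ^ t) hy1' (hYck t) d
    rw [← zpow_mul] at h
    exact h
  have P1' : ∀ d α : ℤ, ((γ Y) ^ d) (X ^ α) = X ^ α * c ^ (t * d * α) := by
    intro d α
    rw [map_zpow, P1]
    have h5 : Commute X (c ^ (t * d)) := hcg X (t * d)
    rw [h5.mul_zpow, ← zpow_mul]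
  have P2 : ∀ d : ℤ, ((γ Y) ^ d) Y = Y * z ^ ((s + t) * d) := by
    intro d
    have h := movepow (γ Y) Y (z ^ (s + t)) hy2' (hYzk (s + t)) d
    rw [← zpow_mul] at h
    exact h
  have P2' : ∀ d β : ℤ, ((γ Y) ^ d) (Y ^ β) = Y ^ β * z ^ ((s + t) * d * β) := by
    intro d β
    rw [map_zpow, P2]
    have h5 : Commute Y (z ^ ((s + t) * d)) := hzg Y ((s + t) * d)
    rw [h5.mul_zpow, ← zpow_mul]
  have P3 : ∀ a : ℤ, ((γ X) ^ a) Y = Y * c ^ (s * a) := by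
    intro a
    have h := movepow (γ X) Y (c ^ s) hx2' (hXck s) a
    rw [← zpow_mul] at h
    exact h
  have P3' : ∀ a β : ℤ, ((γ X) ^ a) (Y ^ β) = Y ^ β * c ^ (s * a * β) := by
    intro a β
    rw [map_zpow, P3]
    have h5 : Commute Y (c ^ (s * a)) := hcg Y (s * a)
    rw [h5.mul_zpow, ← zpow_mul]
  have P4 : ∀ a α : ℤ, ((γ X) ^ a) (X ^ α) = X ^ α := by
    intro a α
    rw [map_zpow, fixpow (γ X) X hx1 a]
  have P5 : ∀ a k : ℤ, ((γ X) ^ a) (c ^ k) = c ^ k := by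
    intro a k
    rw [map_zpow, fixpow (γ X) c hXc' a]
  have P6 : ∀ d k : ℤ, ((γ Y) ^ d) (c ^ k) = c ^ k := by
    intro d k
    rw [map_zpow, fixpow (γ Y) c hYc d]
  have P7 : ∀ a k : ℤ, ((γ X) ^ a) (z ^ k) = z ^ k := by
    intro a k
    rw [map_zpow, fixpow (γ X) z hXz a]
  have P8 : ∀ d k : ℤ, ((γ Y) ^ d) (z ^ k) = z ^ k := by
    intro d k
    rw [map_zpow, fixpow (γ Y) z hYz d]
  -- the automorphisms of the two generators commute
  have hAC : γ X * γ Y = γ Y * γ X := by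
    apply MulEquiv.toMonoidHom_injective
    apply MonoidHom.eq_of_eqOn_dense htop
    rintro v (rfl | rfl)
    · show (γ X * γ Y) X = (γ Y * γ X) X
      rw [MulAut.mul_apply, MulAut.mul_apply, hy1', hx1, map_mul, hx1, hXck, hy1']
    · show (γ X * γ Y) Y = (γ Y * γ X) Y
      rw [MulAut.mul_apply, MulAut.mul_apply, hy2', hx2', map_mul, hx2', hXzk,
        map_mul, hy2', hYck]
      calc Y * c ^ s * z ^ (s + t) = Y * (c ^ s * z ^ (s + t)) := by group
        _ = Y * (z ^ (s + t) * c ^ s) := by rw [← hzg (c ^ s) (s + t)]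
        _ = Y * z ^ (s + t) * c ^ s := by group
  have hACd : ∀ (d : ℤ) (g : GpGroup p), γ X (((γ Y) ^ d) g) = ((γ Y) ^ d) (γ X g) := by
    intro d g
    have h : Commute (γ X) (γ Y) := hAC
    have h2 := (h.zpow_right d)
    have h3 := DFunLike.congr_fun h2.eq g
    rw [MulAut.mul_apply, MulAut.mul_apply] at h3
    exact h3
  -- pointwise description of ν
  have hνap : ∀ (h a : GpGroup p), ν h a = γ h a * h := by
    intro h a
    rw [hν]
    rfl
  have hν2 : ∀ g h : GpGroup p, ν g * ν h = ν (γ g h * g) := by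
    intro g h
    apply Equiv.ext
    intro a
    rw [Equiv.Perm.mul_apply, hνap, hνap, hνap, map_mul]
    have hkey : γ (γ g h * g) = γ g * γ h := by
      rw [hγ, hβ]
      group
    rw [hkey, MulAut.mul_apply]
    group
  -- PART 1
  have hXYd : ∀ d : ℤ, X * Y ^ d = Y ^ d * (X * c ^ d) := by
    intro d
    have h := hMd d
    calc X * Y ^ d = Y ^ d * ((Y ^ d)⁻¹ * X * Y ^ d) := by group
      _ = Y ^ d * (X * c ^ d) := by rw [h]
  have hγXYd : ∀ d : ℤ, γ X (Y ^ d) = Y ^ d * c ^ (s * d) := by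
    intro d
    rw [map_zpow, hx2']
    have h5 : Commute Y (c ^ s) := hcg Y s
    rw [h5.mul_zpow, ← zpow_mul]
  have part1 : ∀ d : ℤ,
      ν (Y ^ d) * ν X * (ν (Y ^ d))⁻¹ * (ν X)⁻¹
        = ν (X ^ ((p : ℤ) * d * (1 + t - s))) := by
    intro d
    have hE : ν (Y ^ d) * ν X = ν (c ^ (d * (1 + t - s))) * ν X * ν (Y ^ d) := by
      apply Equiv.ext
      intro a
      rw [Equiv.Perm.mul_apply, Equiv.Perm.mul_apply, Equiv.Perm.mul_apply]
      simp only [hνap]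
      simp only [hγc, MulAut.one_apply]
      simp only [hγpow]
      simp only [map_mul]
      rw [P1, hγXYd, hACd]
      have hgr : X * (c ^ (t * d) * Y ^ d)
          = Y ^ d * (c ^ (s * d) * (X * c ^ (d * (1 + t - s)))) := by
        have e1 : c ^ (s * d) * (X * c ^ (d * (1 + t - s))) = X * c ^ (d + t * d) := by
          rw [← mul_assoc, ← hcg X (s * d), mul_assoc, ← zpow_add]
          congr 1
          ring
        rw [e1]
        calc X * (c ^ (t * d) * Y ^ d) = X * (Y ^ d * c ^ (t * d)) := by
              rw [← hcg (Y ^ d) (t * d)]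
          _ = (X * Y ^ d) * c ^ (t * d) := by rw [mul_assoc]
          _ = (Y ^ d * (X * c ^ d)) * c ^ (t * d) := by rw [hXYd]
          _ = Y ^ d * (X * c ^ (d + t * d)) := by
              rw [mul_assoc, mul_assoc, ← zpow_add]
      simp only [mul_assoc]
      rw [hgr]
    have goalEq : ν (Y ^ d) * ν X * (ν (Y ^ d))⁻¹ * (ν X)⁻¹
        = ν (c ^ (d * (1 + t - s))) := by
      calc ν (Y ^ d) * ν X * (ν (Y ^ d))⁻¹ * (ν X)⁻¹
          = (ν (Y ^ d) * ν X) * (ν X * ν (Y ^ d))⁻¹ := by group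
        _ = (ν (c ^ (d * (1 + t - s))) * ν X * ν (Y ^ d)) * (ν X * ν (Y ^ d))⁻¹ := by
            rw [hE]
        _ = ν (c ^ (d * (1 + t - s))) := by group
    have hexp : X ^ ((p : ℤ) * d * (1 + t - s)) = c ^ (d * (1 + t - s)) := by
      rw [← hcpow (d * (1 + t - s))]
      congr 1
      ring
    rw [hexp]
    exact goalEq
  refine ⟨part1, ?_⟩
  -- PART 2
  intro hdvd
  obtain ⟨m, hm⟩ := hdvd
  -- normal form
  have hNF : ∀ g : GpGroup p, ∃ a b : ℤ, g = X ^ a * Y ^ b := by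
    have hS : ∀ g ∈ Subgroup.closure ({X, Y} : Set (GpGroup p)),
        ∃ a b : ℤ, g = X ^ a * Y ^ b := by
      intro g hg
      refine Subgroup.closure_induction ?_ ?_ ?_ ?_ hg
      · rintro v (rfl | rfl)
        · exact ⟨1, 0, by simp⟩
        · exact ⟨0, 1, by simp⟩
      · exact ⟨0, 0, by simp⟩
      · rintro g₁ g₂ - - ⟨a₁, b₁, rfl⟩ ⟨a₂, b₂, rfl⟩
        refine ⟨a₁ + (a₂ + (p : ℤ) * (-(b₁ * a₂))), b₁ + b₂, ?_⟩
        calc X ^ a₁ * Y ^ b₁ * (X ^ a₂ * Y ^ b₂)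
            = X ^ a₁ * (Y ^ b₁ * X ^ a₂) * Y ^ b₂ := by group
          _ = X ^ a₁ * (X ^ a₂ * c ^ (-(b₁ * a₂)) * Y ^ b₁) * Y ^ b₂ := by rw [hswap]
          _ = (X ^ a₁ * (X ^ a₂ * c ^ (-(b₁ * a₂)))) * (Y ^ b₁ * Y ^ b₂) := by group
          _ = X ^ (a₁ + (a₂ + (p : ℤ) * (-(b₁ * a₂)))) * Y ^ (b₁ + b₂) := by
              rw [← hcpow (-(b₁ * a₂)), ← zpow_add, ← zpow_add, ← zpow_add]
      · rintro g₁ - ⟨a, b, rfl⟩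
        refine ⟨-a + (p : ℤ) * (-(b * a)), -b, ?_⟩
        calc (X ^ a * Y ^ b)⁻¹ = Y ^ (-b) * X ^ (-a) := by group
          _ = X ^ (-a) * c ^ (-((-b) * (-a))) * Y ^ (-b) := by rw [hswap]
          _ = X ^ (-a + (p : ℤ) * (-(b * a))) * Y ^ (-b) := by
              rw [show -((-b) * (-a)) = -(b * a) by ring, ← hcpow (-(b * a)),
                ← zpow_add]
    intro g
    exact hS g (by rw [htop]; trivial)
  -- central shuffle helpers
  have hcent2 : ∀ (i j : ℤ) (w : GpGroup p), (c ^ i * z ^ j) * w = w * (c ^ i * z ^ j) := by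
    intro i j w
    calc (c ^ i * z ^ j) * w = c ^ i * (z ^ j * w) := by group
      _ = c ^ i * (w * z ^ j) := by rw [← hzg w j]
      _ = (c ^ i * w) * z ^ j := by group
      _ = (w * c ^ i) * z ^ j := by rw [← hcg w i]
      _ = w * (c ^ i * z ^ j) := by group
  have hmix : ∀ a b α β : ℤ, (X ^ α * Y ^ β) * (X ^ a * Y ^ b)
      = (X ^ (α + a) * Y ^ (β + b)) * c ^ (-(β * a)) := by
    intro a b α β
    calc (X ^ α * Y ^ β) * (X ^ a * Y ^ b)
        = X ^ α * ((Y ^ β * X ^ a) * Y ^ b) := by group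
      _ = X ^ α * ((X ^ a * c ^ (-(β * a)) * Y ^ β) * Y ^ b) := by rw [hswap]
      _ = (X ^ α * X ^ a) * ((c ^ (-(β * a)) * Y ^ β) * Y ^ b) := by group
      _ = (X ^ α * X ^ a) * ((Y ^ β * c ^ (-(β * a))) * Y ^ b) := by
          rw [← hcg (Y ^ β) (-(β * a))]
      _ = (X ^ α * X ^ a) * (Y ^ β * (c ^ (-(β * a)) * Y ^ b)) := by group
      _ = (X ^ α * X ^ a) * (Y ^ β * (Y ^ b * c ^ (-(β * a)))) := by
          rw [← hcg (Y ^ b) (-(β * a))]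
      _ = (X ^ (α + a) * Y ^ (β + b)) * c ^ (-(β * a)) := by
          group
  have hshuffle : ∀ (g1 g2 : GpGroup p) (i j k : ℤ),
      (g1 * c ^ i) * ((g2 * c ^ j) * z ^ k) = (g1 * g2) * (c ^ (i + j) * z ^ k) := by
    intro g1 g2 i j k
    calc (g1 * c ^ i) * ((g2 * c ^ j) * z ^ k)
        = g1 * ((c ^ i * g2) * (c ^ j * z ^ k)) := by group
      _ = g1 * ((g2 * c ^ i) * (c ^ j * z ^ k)) := by rw [← hcg g2 i]
      _ = (g1 * g2) * (c ^ (i + j) * z ^ k) := by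
          rw [zpow_add]
          group
  -- the key normal form for the star product
  have hform : ∀ a b α β : ℤ,
      γ (X ^ a * Y ^ b) (X ^ α * Y ^ β) * (X ^ a * Y ^ b)
        = (X ^ (α + a) * Y ^ (β + b))
            * (c ^ (t * b * α + s * a * β - β * a) * z ^ ((s + t) * b * β)) := by
    intro a b α β
    have hγap : γ (X ^ a * Y ^ b) (X ^ α * Y ^ β)
        = ((γ X) ^ a) (((γ Y) ^ b) (X ^ α * Y ^ β)) := by
      rw [hγ, hγpow, hγpow, MulAut.mul_apply]
    have hγval : γ (X ^ a * Y ^ b) (X ^ α * Y ^ β)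
        = (X ^ α * Y ^ β) * (c ^ (t * b * α + s * a * β) * z ^ ((s + t) * b * β)) := by
      rw [hγap, map_mul, P1', P2', map_mul, map_mul, map_mul, P4, P5, P3', P7]
      exact hshuffle (X ^ α) (Y ^ β) (t * b * α) (s * a * β) ((s + t) * b * β)
    rw [hγval]
    calc (X ^ α * Y ^ β) * (c ^ (t * b * α + s * a * β) * z ^ ((s + t) * b * β))
          * (X ^ a * Y ^ b)
        = ((X ^ α * Y ^ β) * (X ^ a * Y ^ b))
            * (c ^ (t * b * α + s * a * β) * z ^ ((s + t) * b * β)) := by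
          rw [mul_assoc, hcent2, ← mul_assoc]
      _ = ((X ^ (α + a) * Y ^ (β + b)) * c ^ (-(β * a)))
            * (c ^ (t * b * α + s * a * β) * z ^ ((s + t) * b * β)) := by rw [hmix]
      _ = (X ^ (α + a) * Y ^ (β + b))
            * (c ^ (t * b * α + s * a * β - β * a) * z ^ ((s + t) * b * β)) := by
          rw [mul_assoc, ← mul_assoc (c ^ (-(β * a))), ← zpow_add]
          congr 3
          ring
  have hstar : ∀ g h : GpGroup p, γ g h * g = γ h g * h := by
    intro g h
    obtain ⟨a, b, rfl⟩ := hNF g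
    obtain ⟨α, β, rfl⟩ := hNF h
    rw [hform, hform]
    have hcCC : c ^ (t * b * α + s * a * β - β * a)
        = c ^ (t * β * a + s * α * b - b * α) := by
      have e : t * b * α + s * a * β - β * a
          = (t * β * a + s * α * b - b * α) + (p : ℤ) * ((b * α - a * β) * m) := by
        linear_combination (b * α - a * β) * hm
      rw [e, zpow_add, zpow_mul, hcp, one_zpow, mul_one]
    rw [hcCC, add_comm α a, add_comm β b,
      show (s + t) * b * β = (s + t) * β * b by ring]
  have hcom : ∀ g h : GpGroup p, ν g * ν h = ν h * ν g := by
    intro g h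
    rw [hν2, hν2, hstar]
  refine ⟨hcom, ?_⟩
  rintro ⟨e⟩
  have habel : ∀ n₁ n₂ : Subgroup.closure (Set.range ν), n₁ * n₂ = n₂ * n₁ := by
    have h1 : Subgroup.closure (Set.range ν) ≤ Subgroup.centralizer (Set.range ν) := by
      rw [Subgroup.closure_le]
      intro a ha
      rw [SetLike.mem_coe, Subgroup.mem_centralizer_iff]
      rintro b ⟨g, rfl⟩
      obtain ⟨g', rfl⟩ := ha
      exact hcom g g'
    have h2 : Subgroup.closure (Set.range ν)
        ≤ Subgroup.centralizer ((Subgroup.closure (Set.range ν) : Subgroup _) : Set _) := by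
      rw [Subgroup.closure_le]
      intro a ha
      rw [SetLike.mem_coe, Subgroup.mem_centralizer_iff]
      intro b hb
      have := Subgroup.mem_centralizer_iff.mp (h1 hb) a ha
      exact this.symm
    intro n₁ n₂
    apply Subtype.ext
    have := Subgroup.mem_centralizer_iff.mp (h2 n₂.2) n₁.1 (SetLike.mem_coe.mpr n₁.2)
    exact this
  have hcomm : X * Y = Y * X := by
    obtain ⟨nx, hnx⟩ := e.surjective X
    obtain ⟨ny, hny⟩ := e.surjective Y
    calc X * Y = e (nx * ny) := by rw [map_mul, hnx, hny]
      _ = e (ny * nx) := by rw [habel]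
      _ = Y * X := by rw [map_mul, hnx, hny]
  exact gp_xy_ne p hp hcomm
end

section
/- Let G be a finite p-group of class two, p odd, with γ : G → Aut(G) satisfying γ(gh) = γ(h)γ(g), γ(G) ≤ Aut_c(G) and [Z(G), γ(G)] = 1, and suppose the associated bilinear map Δ(g,h) = [g, γ(h)] satisfies Δ(g,h) = [g,h]^c with c ≡ −1/2 (mod exp G'). Then the regular subgroup N = {γ(h)ρ(h) : h ∈ G} is abelian. -/
/-- Let `G` be a finite `p`-group of class two, `p` odd, with `γ : G → Aut G`
an anti-homomorphism (homomorphism in Mathlib's convention) whose values are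
central automorphisms fixing `Z(G)` pointwise, and suppose the associated
bilinear map satisfies `Δ(g,h) = [g, γ(h)] = [g,h]^c` where
`c ≡ -1/2 (mod exp G')`, i.e. `w^(2c+1) = 1` for all `w ∈ G'`. Then the
regular subgroup `N = {ν(h) : x ↦ γ(h)(x) * h}` is abelian. -/
theorem stmt_18 (p : ℕ) (hp : p.Prime) (hodd : Odd p)
    (G : Type*) [Group G] [Finite G] (hpG : IsPGroup p G)
    (h2 : commutator G ≤ Subgroup.center G) (hnab : commutator G ≠ ⊥)
    (γ : G → MulAut G)
    (hγ : ∀ g h : G, γ (g * h) = γ g * γ h)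
    (hcent : ∀ g h : G, g⁻¹ * (γ h) g ∈ Subgroup.center G)
    (hZ : ∀ h : G, ∀ z ∈ Subgroup.center G, (γ h) z = z)
    (c : ℕ) (hc : ∀ w ∈ commutator G, w ^ (2 * c + 1) = 1)
    (hΔ : ∀ g h : G, g⁻¹ * (γ h) g = (g⁻¹ * h⁻¹ * g * h) ^ c)
    (ν : G → Equiv.Perm G)
    (hν : ∀ h : G, ν h = (γ h).toEquiv.trans (Equiv.mulRight h)) :
    ∀ g h : G, ν g * ν h = ν h * ν g := by
  -- membership of basic commutators in the commutator subgroup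
  have hmem : ∀ a b : G, a⁻¹ * b⁻¹ * a * b ∈ commutator G := by
    intro a b
    have h := Subgroup.commutator_mem_commutator (Subgroup.mem_top a⁻¹)
      (Subgroup.mem_top b⁻¹)
    rw [← commutator_def] at h
    simpa [commutatorElement_def, mul_assoc] using h
  have hmemc : ∀ a b : G, (a⁻¹ * b⁻¹ * a * b) ^ c ∈ commutator G := fun a b =>
    Subgroup.pow_mem _ (hmem a b) c
  -- elements of the commutator subgroup commute with everything
  have hcommK : ∀ w ∈ commutator G, ∀ y : G, w * y = y * w := by
    intro w hw y
    exact (Subgroup.mem_center_iff.mp (h2 hw) y).symm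
  -- γ fixes elements of the commutator subgroup
  have hfix : ∀ a : G, ∀ w ∈ commutator G, (γ a) w = w := fun a w hw =>
    hZ a w (h2 hw)
  -- decomposition of γ a b
  have hdec : ∀ a b : G, (γ a) b = b * (b⁻¹ * a⁻¹ * b * a) ^ c := by
    intro a b
    rw [← hΔ b a]
    simp [mul_assoc]
  intro g h
  ext x
  simp only [hν, Equiv.Perm.mul_apply, Equiv.trans_apply, Equiv.coe_mulRight,
    MulEquiv.coe_toEquiv]
  have hcoe : ∀ a : G, ((γ a).toEquiv : G → G) = ⇑(γ a) := fun a => rfl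
  simp only [hcoe]
  rw [map_mul, map_mul]
  -- notation
  set w : G := (x⁻¹ * h⁻¹ * x * h) ^ c with hw_def
  set w' : G := (x⁻¹ * g⁻¹ * x * g) ^ c with hw'_def
  set d : G := h⁻¹ * g⁻¹ * h * g with hd_def
  have hwK : w ∈ commutator G := hmemc x h
  have hw'K : w' ∈ commutator G := hmemc x g
  have hdK : d ∈ commutator G := hmem h g
  have hγhx : (γ h) x = x * w := hdec h x
  have hγgx : (γ g) x = x * w' := hdec g x
  have hγgw : (γ g) w = w := hfix g w hwK
  have hγhw' : (γ h) w' = w' := hfix h w' hw'K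
  have hγgh : (γ g) h = h * d ^ c := by
    rw [hdec g h, hd_def]
  have hγhg : (γ h) g = g * (d⁻¹) ^ c := by
    rw [hdec h g]
    congr 2
    rw [hd_def]
    group
  rw [hγhx, hγgx, map_mul, map_mul, hγgw, hγhw', hγgx, hγhx, hγgh, hγhg]
  -- now a pure computation with central elements
  have hdc : ∀ y : G, d ^ c * y = y * d ^ c :=
    hcommK _ (Subgroup.pow_mem _ hdK c)
  have hdci : ∀ y : G, (d⁻¹) ^ c * y = y * (d⁻¹) ^ c :=
    hcommK _ (Subgroup.pow_mem _ (Subgroup.inv_mem _ hdK) c)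
  have hwc : ∀ y : G, w * y = y * w := hcommK w hwK
  have hw'c : ∀ y : G, w' * y = y * w' := hcommK w' hw'K
  have hhg : h * g = g * h * d := by
    rw [hd_def]; group
  have hkey : d ^ (c + 1) = (d ^ c)⁻¹ := by
    have h1 : d ^ (c + 1) * d ^ c = 1 := by
      rw [← pow_add]
      have : c + 1 + c = 2 * c + 1 := by ring
      rw [this]
      exact hc d hdK
    exact eq_inv_of_mul_eq_one_left h1
  calc x * w' * w * (h * d ^ c) * g
      = x * w' * w * (h * d ^ c * g) := by rw [mul_assoc]
    _ = x * w' * w * (h * g * d ^ c) := by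
        rw [mul_assoc h (d ^ c) g, hdc g]
        simp only [mul_assoc]
    _ = x * w' * w * (g * h * d * d ^ c) := by rw [hhg]
    _ = x * w' * w * (g * h * d ^ (c + 1)) := by
        rw [pow_succ']
        simp [mul_assoc]
    _ = x * w' * w * (g * h * (d ^ c)⁻¹) := by rw [hkey]
    _ = x * w * w' * (g * d⁻¹ ^ c) * h := by
        simp only [← inv_pow, mul_assoc]
        rw [hdci h, ← mul_assoc w' w, ← hwc w']
        simp only [mul_assoc]
end
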